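/- arXiv:math/9610207 — 5 statements merged into one kernel-verified Lean document; each statement's English description precedes it below -/
import Mathlib

section
/- For any analytic set A ⊆ I, there is a closed set B ⊆ I × I such that: if x ∈ A, then the cross-section B_x = {y : (x,y) ∈ B} is uncountable, and if x ∉ A, then B_x consists only of rational numbers. -/
open Cardinal Ordinal Topology

open unitInterval

open Filter Set

noncomputable section StatementSeven

namespace StmtSeven

/-- positions of ones -/
def pos (s : ℕ → ℕ) : ℕ → ℕ
  | 0 => s 0
  | k+1 => pos s k + s (k+1) + 1

lemma pos_strictMono (s : ℕ → ℕ) : StrictMono (pos s) :=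
  strictMono_nat_of_lt_succ fun k => by show pos s k < pos s k + s (k+1) + 1; omega

lemma self_le_pos (s : ℕ → ℕ) (k : ℕ) : k ≤ pos s k := by
  induction k with
  | zero => exact Nat.zero_le _
  | succ k ih => simp only [pos]; omega

lemma pos_congr {s s' : ℕ → ℕ} (k : ℕ) (h : ∀ m ≤ k, s m = s' m) : pos s k = pos s' k := by
  induction k with
  | zero => simp [pos, h 0 (le_refl 0)]
  | succ k ih =>
    simp only [pos]
    rw [ih (fun m hm => h m (hm.trans (Nat.le_succ k))), h (k+1) le_rfl]

open Classical in
/-- characteristic binary sequence -/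
def jj (s : ℕ → ℕ) (i : ℕ) : Bool := decide (∃ k, pos s k = i)

lemma jj_iff (s : ℕ → ℕ) (i : ℕ) : jj s i = true ↔ ∃ k, pos s k = i := by
  simp [jj]

lemma jj_pos (s : ℕ → ℕ) (k : ℕ) : jj s (pos s k) = true := (jj_iff s _).2 ⟨k, rfl⟩

lemma jj_congr {s s' : ℕ → ℕ} (i : ℕ) (h : ∀ m ≤ i, s m = s' m) : jj s i = jj s' i := by
  have key : ∀ t t' : ℕ → ℕ, (∀ m ≤ i, t m = t' m) → jj t i = true → jj t' i = true := by
    intro t t' ht hj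
    rcases (jj_iff t i).1 hj with ⟨k, hk⟩
    have hki : k ≤ i := hk ▸ self_le_pos t k
    refine (jj_iff t' i).2 ⟨k, ?_⟩
    rw [← pos_congr k (fun m hm => ht m (hm.trans hki))]; exact hk
  rcases Bool.eq_false_or_eq_true (jj s i) with h1 | h1 <;>
    rcases Bool.eq_false_or_eq_true (jj s' i) with h2 | h2 <;> simp [h1, h2]
  · exact absurd (key s s' h h1) (by simp [h2])
  · exact absurd (key s' s (fun m hm => (h m hm).symm) h2) (by simp [h1])


lemma pos_prefix {u v : ℕ → ℕ} {k : ℕ} (h : ∀ i ≤ pos u k, jj v i = jj u i) :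
    ∀ m, m ≤ k → pos v m = pos u m := by
  intro m
  induction m using Nat.strong_induction_on with
  | _ m IH =>
    intro hmk
    have hum : pos u m ≤ pos u k := (pos_strictMono u).monotone hmk
    -- (a) ∃ k', pos v k' = pos u m
    have h1 : jj v (pos u m) = true := by rw [h _ hum]; exact jj_pos u m
    rcases (jj_iff v _).1 h1 with ⟨k', hk'⟩
    have hk'm : m ≤ k' := by
      by_contra hlt
      push_neg at hlt
      have := IH k' hlt (hlt.le.trans hmk)
      rw [this] at hk'
      exact absurd hk' (pos_strictMono u hlt).ne
    have hle : pos v m ≤ pos u m := hk' ▸ (pos_strictMono v).monotone hk'm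
    rcases lt_or_eq_of_le hle with hlt | heq
    · exfalso
      have h2 : jj u (pos v m) = true := by
        rw [← h _ (hle.trans hum)]; exact jj_pos v m
      rcases (jj_iff u _).1 h2 with ⟨k'', hk''⟩
      rcases lt_or_ge k'' m with hk2 | hk2
      · have hIH := IH k'' hk2 (hk2.le.trans hmk)
        -- pos u k'' = pos v m and pos v k'' = pos u k'' so pos v k'' = pos v m with k'' < m
        rw [← hIH] at hk''
        exact absurd hk''.symm (pos_strictMono v hk2).ne'
      · have : pos u m ≤ pos u k'' := (pos_strictMono u).monotone hk2
        omega
    · exact heq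

lemma val_eq_of_pos_eq {u v : ℕ → ℕ} {k : ℕ} (h : ∀ m ≤ k, pos v m = pos u m) :
    ∀ m ≤ k, v m = u m := by
  intro m hm
  cases m with
  | zero => have := h 0 (Nat.zero_le _); simpa [pos] using this
  | succ m =>
    have h1 := h (m+1) hm
    have h2 := h m ((Nat.le_succ m).trans hm)
    simp only [pos] at h1
    omega

lemma jj_injective : Function.Injective jj := by
  intro u v huv
  funext m
  have : ∀ i ≤ pos u m, jj v i = jj u i := fun i _ => by rw [huv]
  exact (val_eq_of_pos_eq (pos_prefix this) m le_rfl).symm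

lemma exists_jj_eq {b : ℕ → Bool} (hb : {i | b i = true}.Infinite) : ∃ u, jj u = b := by
  set p : ℕ → Prop := fun i => b i = true with hp
  have hpinf : (setOf p).Infinite := hb
  set u : ℕ → ℕ := fun m => Nat.rec (Nat.nth p 0) (fun m _ => Nat.nth p (m+1) - Nat.nth p m - 1) m with hu
  have hmono := Nat.nth_strictMono hpinf
  have hposu : ∀ m, pos u m = Nat.nth p m := by
    intro m
    induction m with
    | zero => simp [pos, hu]
    | succ m ih =>
      have : Nat.nth p m < Nat.nth p (m+1) := hmono (Nat.lt_succ_self m)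
      simp only [pos, ih]
      simp only [hu]
      omega
  refine ⟨u, funext fun i => ?_⟩
  have : jj u i = true ↔ b i = true := by
    rw [jj_iff]
    constructor
    · rintro ⟨k, hk⟩
      rw [hposu] at hk
      subst hk
      exact Nat.nth_mem_of_infinite hpinf k
    · intro hbi
      have : i ∈ Set.range (Nat.nth p) := by
        rw [Nat.range_nth_of_infinite hpinf]; exact hbi
      rcases this with ⟨k, hk⟩
      exact ⟨k, by rw [hposu]; exact hk⟩
  rcases Bool.eq_false_or_eq_true (jj u i) with h1 | h1 <;>
    rcases Bool.eq_false_or_eq_true (b i) with h2 | h2 <;> simp_all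


lemma tendsto_discrete_iff {α X : Type*} [TopologicalSpace X] [DiscreteTopology X]
    {l : Filter α} {f : α → X} {a : X} :
    Filter.Tendsto f l (𝓝 a) ↔ ∀ᶠ x in l, f x = a := by
  rw [nhds_discrete, Filter.tendsto_pure]

lemma mem_nhds_prefix (s : ℕ → ℕ) (i : ℕ) : {s' : ℕ → ℕ | ∀ m ≤ i, s' m = s m} ∈ 𝓝 s := by
  have heq : Set.pi (Set.Iic i) (fun a => {s a}) = {s' : ℕ → ℕ | ∀ m ≤ i, s' m = s m} := by
    ext s'; simp [Set.mem_pi]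
  rw [← heq]
  refine set_pi_mem_nhds (Set.finite_Iic i) (fun a _ => ?_)
  rw [nhds_discrete]
  simp

lemma continuous_jj : Continuous jj := by
  refine continuous_pi fun i => ?_
  rw [continuous_iff_continuousAt]
  intro s
  refine tendsto_nhds_of_eventually_eq ?_
  filter_upwards [mem_nhds_prefix s i] with s' hs'
  exact jj_congr i hs'

lemma tendsto_of_jj_tendsto {U : ℕ → (ℕ → ℕ)} {u : ℕ → ℕ}
    (h : Tendsto (fun n => jj (U n)) atTop (𝓝 (jj u))) : Tendsto U atTop (𝓝 u) := by
  rw [tendsto_pi_nhds] at h ⊢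
  intro m
  rw [tendsto_discrete_iff]
  have hev : ∀ᶠ n in atTop, ∀ i ∈ Finset.Iic (pos u m), jj (U n) i = jj u i := by
    rw [Filter.eventually_all_finset]
    intro i _
    have := h i
    rw [tendsto_discrete_iff] at this
    exact this
  filter_upwards [hev] with n hn
  exact val_eq_of_pos_eq (pos_prefix (fun i hi => hn i (Finset.mem_Iic.2 hi))) m le_rfl

/-! ### The evaluation map into ℝ -/

def term (b : ℕ → Bool) (i : ℕ) : ℝ := (cond (b i) 2 0 : ℝ) * (1/3 : ℝ)^(i+1)

def ee (b : ℕ → Bool) : ℝ := ∑' i, term b i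

lemma term_nonneg (b : ℕ → Bool) (i : ℕ) : 0 ≤ term b i := by
  unfold term; cases b i <;> simp

lemma term_le (b : ℕ → Bool) (i : ℕ) : term b i ≤ 2 * (1/3 : ℝ)^(i+1) := by
  unfold term
  cases b i <;> simp

lemma summable_bound : Summable (fun i : ℕ => 2 * (1/3 : ℝ)^(i+1)) := by
  have : Summable (fun i : ℕ => (1/3 : ℝ)^i) := summable_geometric_of_lt_one (by norm_num) (by norm_num)
  simpa [pow_succ, mul_comm, mul_assoc, mul_left_comm] using (this.mul_left (2 * (1/3 : ℝ)))

lemma tsum_bound : ∑' i : ℕ, 2 * (1/3 : ℝ)^(i+1) = 1 := by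
  have h : ∑' i : ℕ, (1/3 : ℝ)^i = (1 - 1/3)⁻¹ :=
    tsum_geometric_of_lt_one (by norm_num) (by norm_num)
  calc ∑' i : ℕ, 2 * (1/3 : ℝ)^(i+1)
      = ∑' i : ℕ, (2 * (1/3 : ℝ)) * (1/3 : ℝ)^i := by
        congr 1; funext i; ring
    _ = (2 * (1/3 : ℝ)) * ∑' i : ℕ, (1/3 : ℝ)^i := tsum_mul_left
    _ = 1 := by rw [h]; norm_num

lemma summable_term (b : ℕ → Bool) : Summable (term b) :=
  Summable.of_nonneg_of_le (term_nonneg b) (term_le b) summable_bound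

lemma ee_mem (b : ℕ → Bool) : ee b ∈ Set.Icc (0:ℝ) 1 := by
  constructor
  · exact tsum_nonneg (term_nonneg b)
  · rw [← tsum_bound]
    exact Summable.tsum_le_tsum (term_le b) (summable_term b) summable_bound

lemma continuous_ee : Continuous ee := by
  refine continuous_tsum (fun i => ?_) summable_bound (fun i b => ?_)
  · exact ((continuous_of_discreteTopology (α := Bool)
      (f := fun v => (cond v 2 0 : ℝ))).comp (continuous_apply i)).mul continuous_const
  · rw [Real.norm_eq_abs, abs_of_nonneg (term_nonneg b i)]
    exact term_le b i

lemma ee_tail_le (b : ℕ → Bool) (n : ℕ) : ∑' i, term b (i + n) ≤ (1/3 : ℝ)^n := by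
  have h1 : Summable (fun i => term b (i + n)) := (summable_term b).comp_injective (add_left_injective n)
  have h2 : Summable (fun i : ℕ => 2 * (1/3 : ℝ)^(i + n + 1)) :=
    summable_bound.comp_injective (add_left_injective n)
  calc ∑' i, term b (i + n) ≤ ∑' i : ℕ, 2 * (1/3 : ℝ)^(i + n + 1) :=
        Summable.tsum_le_tsum (fun i => term_le b (i+n)) h1 h2
    _ = (1/3:ℝ)^n * ∑' i : ℕ, 2 * (1/3 : ℝ)^(i+1) := by
        rw [← tsum_mul_left]
        congr 1; funext i; ring
    _ = (1/3:ℝ)^n := by rw [tsum_bound, mul_one]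

lemma ee_lt {b c : ℕ → Bool} {n : ℕ} (hb : b n = false) (hc : c n = true)
    (hpre : ∀ i < n, b i = c i) : ee b < ee c := by
  have hsb := summable_term b
  have hsc := summable_term c
  have hbsplit := Summable.sum_add_tsum_nat_add n hsb
  have hcsplit := Summable.sum_add_tsum_nat_add n hsc
  have hS : ∑ i ∈ Finset.range n, term b i = ∑ i ∈ Finset.range n, term c i := by
    refine Finset.sum_congr rfl fun i hi => ?_
    unfold term
    rw [hpre i (Finset.mem_range.1 hi)]
  -- tail of b: term b n = 0, so tail b = tsum of (i+1+n) shifted ≤ (1/3)^(n+1)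
  have htb : ∑' i, term b (i + n) ≤ (1/3:ℝ)^(n+1) := by
    have h1 : Summable (fun i => term b (i + n)) := hsb.comp_injective (add_left_injective n)
    have := Summable.sum_add_tsum_nat_add 1 h1
    have hfirst : ∑ i ∈ Finset.range 1, term b (i + n) = 0 := by
      simp [term, hb]
    rw [hfirst, zero_add] at this
    rw [← this]
    calc ∑' i, term b (i + 1 + n) = ∑' i, term b (i + (n+1)) := by
          congr 1; funext i; congr 1; omega
      _ ≤ (1/3:ℝ)^(n+1) := ee_tail_le b (n+1)
  have htc : (2:ℝ) * (1/3)^(n+1) ≤ ∑' i, term c (i + n) := by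
    have h1 : Summable (fun i => term c (i + n)) := hsc.comp_injective (add_left_injective n)
    have h0 : term c (0 + n) = 2 * (1/3:ℝ)^(n+1) := by simp [term, hc]
    calc (2:ℝ) * (1/3)^(n+1) = term c (0 + n) := h0.symm
      _ ≤ ∑' i, term c (i + n) := Summable.le_tsum h1 0 (fun j _ => term_nonneg c (j + n))
  have hlt : ∑' i, term b (i + n) < ∑' i, term c (i + n) := by
    have : (1/3:ℝ)^(n+1) < 2 * (1/3)^(n+1) := by
      have : (0:ℝ) < (1/3)^(n+1) := by positivity
      linarith
    linarith
  unfold ee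
  rw [← hbsplit, ← hcsplit, hS]
  linarith

lemma ee_injective : Function.Injective ee := by
  intro b c h
  by_contra hne
  have hex : ∃ i, b i ≠ c i := by
    by_contra hall
    push_neg at hall
    exact hne (funext hall)
  classical
  let n := Nat.find hex
  have hn : b n ≠ c n := Nat.find_spec hex
  have hpre : ∀ i < n, b i = c i := fun i hi => not_not.1 (Nat.find_min hex hi)
  rcases Bool.eq_false_or_eq_true (b n) with h1 | h1 <;>
    rcases Bool.eq_false_or_eq_true (c n) with h2 | h2
  · exact hn (h1.trans h2.symm)
  · exact absurd h (ne_of_gt (ee_lt h2 h1 (fun i hi => (hpre i hi).symm)))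
  · exact absurd h (ne_of_lt (ee_lt h1 h2 hpre))
  · exact hn (h1.trans h2.symm)

lemma ee_rat {b : ℕ → Bool} (hfin : {i | b i = true}.Finite) : ∃ q : ℚ, ee b = (q : ℝ) := by
  classical
  refine ⟨∑ i ∈ hfin.toFinset, 2 * (1/3 : ℚ)^(i+1), ?_⟩
  have : ee b = ∑ i ∈ hfin.toFinset, term b i := by
    refine tsum_eq_sum (fun i hi => ?_)
    have : b i = false := by
      rcases Bool.eq_false_or_eq_true (b i) with h | h
      · exact absurd (hfin.mem_toFinset.2 h) hi
      · exact h
    simp [term, this]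
  rw [this]
  push_cast
  refine Finset.sum_congr rfl fun i hi => ?_
  have : b i = true := hfin.mem_toFinset.1 hi
  simp [term, this]

/-! ### Interleaving -/

def il (s t : ℕ → ℕ) : ℕ → ℕ := fun n => if n % 2 = 0 then s (n/2) else t (n/2)

lemma il_even (s t : ℕ → ℕ) (k : ℕ) : il s t (2*k) = s k := by
  simp [il, Nat.mul_mod_right, Nat.mul_div_cancel_left _ (by norm_num : 0 < 2)]

lemma il_odd (s t : ℕ → ℕ) (k : ℕ) : il s t (2*k+1) = t k := by
  have h1 : (2*k+1) % 2 = 1 := by omega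
  have h2 : (2*k+1) / 2 = k := by omega
  simp [il, h1, h2]

lemma continuous_il : Continuous (fun p : (ℕ → ℕ) × (ℕ → ℕ) => il p.1 p.2) := by
  refine continuous_pi fun n => ?_
  by_cases h : n % 2 = 0 <;> simp only [il, h, if_true, if_false]
  · exact (continuous_apply (n/2)).comp continuous_fst
  · exact (continuous_apply (n/2)).comp continuous_snd


lemma not_countable_nat_fun : ¬ Countable (ℕ → ℕ) := by
  intro h
  obtain ⟨F, hF⟩ := exists_surjective_nat (ℕ → ℕ)
  obtain ⟨n, hn⟩ := hF (fun m => F m m + 1)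
  have := congrFun hn n
  omega

lemma phi_mem (s : ℕ → ℕ) : ee (jj s) ∈ unitInterval := ee_mem (jj s)

end StmtSeven
end StatementSeven

open StmtSeven

theorem statement_7 (A : Set I) (hA : MeasureTheory.AnalyticSet A) :
    ∃ B : Set (I × I), IsClosed B ∧ ∀ x : I,
      (x ∈ A → ¬Set.Countable {y : I | (x, y) ∈ B}) ∧
      (x ∉ A → ∀ y : I, (x, y) ∈ B → ∃ q : ℚ, (y : ℝ) = (q : ℝ)) := by
  classical
  rw [MeasureTheory.AnalyticSet_def] at hA
  rcases hA with hA | ⟨f, hf, hrange⟩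
  · refine ⟨∅, isClosed_empty, fun x => ⟨fun hx => absurd hx (by simp [hA]), ?_⟩⟩
    intro _ y hy
    exact absurd hy (by simp)
  · set φ : (ℕ → ℕ) → I := fun s => ⟨ee (jj s), phi_mem s⟩ with hφ
    have hφcont : Continuous φ := by
      apply Continuous.subtype_mk
      exact continuous_ee.comp continuous_jj
    have hφinj : Function.Injective φ := by
      intro a b h
      exact jj_injective (ee_injective (congrArg Subtype.val h))
    set g : ((ℕ → ℕ) × (ℕ → ℕ)) → I × I := fun p => (f p.1, φ (il p.1 p.2)) with hg
    have hgcont : Continuous g :=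
      ((hf.comp continuous_fst).prodMk (hφcont.comp continuous_il))
    refine ⟨closure (range g), isClosed_closure, fun x => ⟨?_, ?_⟩⟩
    · -- uncountability
      intro hx hcount
      obtain ⟨s, hs⟩ : ∃ s, f s = x := by rw [← hrange] at hx; exact hx
      have hsub : range (fun t => φ (il s t)) ⊆ {y | (x, y) ∈ closure (range g)} := by
        rintro y ⟨t, rfl⟩
        exact subset_closure ⟨(s, t), by simp [hg, hs]⟩
      have hinj : Function.Injective (fun t => φ (il s t)) := by
        intro t t' h
        have h2 := hφinj h
        funext k
        have := congrFun h2 (2*k+1)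
        rwa [il_odd, il_odd] at this
      have h1 : (range (fun t => φ (il s t))).Countable := hcount.mono hsub
      have h2 : Countable (range (fun t => φ (il s t))) := h1.to_subtype
      exact not_countable_nat_fun ((Equiv.ofInjective _ hinj).injective.countable)
    · -- rationality
      intro hx y hy
      obtain ⟨z, hz, hlim⟩ := mem_closure_iff_seq_limit.1 hy
      choose w hw using hz
      have hlim1 : Tendsto (fun n => (z n).1) atTop (𝓝 x) :=
        (continuous_fst.tendsto _).comp hlim
      have hlim2 : Tendsto (fun n => ((z n).2 : ℝ)) atTop (𝓝 (y : ℝ)) :=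
        ((continuous_subtype_val.comp continuous_snd).tendsto _).comp hlim
      set U : ℕ → (ℕ → ℕ) := fun n => il (w n).1 (w n).2 with hU
      have hz1 : ∀ n, (z n).1 = f (w n).1 := fun n => by rw [← hw n]
      have hz2 : ∀ n, ((z n).2 : ℝ) = ee (jj (U n)) := fun n => by rw [← hw n]
      obtain ⟨b, ψ, hψ, hbconv⟩ := SeqCompactSpace.tendsto_subseq (fun n => jj (U n))
      have hee : Tendsto (fun k => ee (jj (U (ψ k)))) atTop (𝓝 (ee b)) :=
        (continuous_ee.tendsto b).comp hbconv
      have hee' : Tendsto (fun k => ee (jj (U (ψ k)))) atTop (𝓝 (y : ℝ)) := by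
        have := hlim2.comp hψ.tendsto_atTop
        simpa [Function.comp_def, hz2] using this
      have hyb : (y : ℝ) = ee b := tendsto_nhds_unique hee' hee
      by_cases hbf : {i | b i = true}.Finite
      · rcases ee_rat hbf with ⟨q, hq⟩
        exact ⟨q, by rw [hyb, hq]⟩
      · exfalso
        obtain ⟨u, hu⟩ := exists_jj_eq hbf
        have hUconv : Tendsto (fun k => U (ψ k)) atTop (𝓝 u) := by
          apply tendsto_of_jj_tendsto
          rw [hu]
          exact hbconv
        -- even coordinates
        have hsconv : Tendsto (fun k => (w (ψ k)).1) atTop (𝓝 (fun m => u (2*m))) := by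
          rw [tendsto_pi_nhds]
          intro m
          rw [tendsto_discrete_iff]
          have := (tendsto_pi_nhds.1 hUconv) (2*m)
          rw [tendsto_discrete_iff] at this
          filter_upwards [this] with k hk
          rw [← il_even (w (ψ k)).1 (w (ψ k)).2 m]
          exact hk
        have hfconv : Tendsto (fun k => f (w (ψ k)).1) atTop (𝓝 (f (fun m => u (2*m)))) :=
          (hf.tendsto _).comp hsconv
        have hfx : Tendsto (fun k => f (w (ψ k)).1) atTop (𝓝 x) := by
          have := hlim1.comp hψ.tendsto_atTop
          simpa [Function.comp_def, hz1] using this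
        have : f (fun m => u (2*m)) = x := tendsto_nhds_unique hfconv hfx
        exact hx (by rw [← hrange, ← this]; exact mem_range_self _)
end

section
/- For each countable ordinal β, let S_β = {(T,H) ∈ 𝒯_β : T ∈ 𝒯' and H = rk_T} (i.e., H satisfies the recursive definition of the rank function of T). Then S_β is a Gδ subset of 𝒯_β (hence a Polish space), and the projection (T,H) ↦ T is a homeomorphism from S_β onto R_β equipped with the β-topology. -/
open Cardinal Ordinal Topology

/-- A tree on `ω`: a set of finite sequences (coded by its characteristic function)
closed under initial segments. -/
def IsTreeFun (T : List ℕ → Bool) : Prop :=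
  ∀ s t : List ℕ, t <+: s → T s = true → T t = true

/-- The space `𝒯` of trees on `ω`, as a (closed) subspace of the Cantor-like space
of subsets of `Seq = List ℕ`. -/
abbrev TreeSpace : Type := {T : List ℕ → Bool // IsTreeFun T}

/-- `childRel T t s` : `t` is an immediate successor of `s` lying in `T`. -/
def childRel (T : List ℕ → Bool) (t s : List ℕ) : Prop :=
  T t = true ∧ ∃ n : ℕ, t = s ++ [n]

/-- The rank function `rk_T : Seq → ω₁ ∪ {∞}` (with `∞ = ⊤`): if `T` is well-founded below
`s`, the least ordinal greater than the ranks of all immediate successors of `s` in `T`;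
otherwise `∞`. -/
noncomputable def treeRank (T : TreeSpace) (s : List ℕ) : WithTop Ordinal.{0} :=
  @dite _ (Acc (childRel T.1) s) (Classical.dec _)
    (fun h => ((h.rank : Ordinal.{0}) : WithTop Ordinal.{0})) (fun _ => ⊤)

/-- `𝒯'`: trees containing the empty sequence such that for each `s`, either all immediate
successors of `s` are in the tree, or none are. -/
def GTreeSet : Set TreeSpace :=
  {T | T.1 [] = true ∧ ∀ (s : List ℕ) (n m : ℕ), T.1 (s ++ [n]) = T.1 (s ++ [m])}

/-- `R_β`: trees in `𝒯'` all of whose nodes have rank `∞` or an ordinal `< β`. -/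
def Rset (β : Ordinal.{0}) : Set TreeSpace :=
  {T | T ∈ GTreeSet ∧ ∀ s : List ℕ, T.1 s = true →
    treeRank T s = ⊤ ∨ treeRank T s < (β : WithTop Ordinal.{0})}

/-- Tagged trees, coded as the graph of the tagging function: a set of pairs
`(s, H s) ∈ Seq × (ω₁ ∪ {∞})`. -/
abbrev Tagged : Type 1 := Set (List ℕ × WithTop Ordinal.{0})

/-- The domain (underlying tree) of a tagged tree. -/
def Tagged.dom (p : Tagged) : Set (List ℕ) := Prod.fst '' p

/-- `(T,H)` is a tagged tree: `H` is a function, `T` is a tree, and `H(s') > H(s)` whenever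
`s'` is a proper initial segment of `s` in `T` (where `∞ > ∞`). -/
def IsTagged (p : Tagged) : Prop :=
  (∀ s h h', (s, h) ∈ p → (s, h') ∈ p → h = h') ∧
  (∀ s t : List ℕ, t <+: s → s ∈ p.dom → t ∈ p.dom) ∧
  (∀ s h t h', (s, h) ∈ p → (t, h') ∈ p → t <+: s → t ≠ s → (h' = ⊤ ∨ h < h'))

/-- `P_β`: the finite `β`-tagged trees (all tags in `β ∪ {∞}`). -/
def Pfin (β : Ordinal.{0}) : Set Tagged :=
  {p | p.Finite ∧ IsTagged p ∧ ∀ x ∈ p, x.2 = ⊤ ∨ x.2 < (β : WithTop Ordinal.{0})}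

/-- `N^β_p = {T ∈ R_β : p ⊆ (T, rk_T)}`. -/
def Nset (β : Ordinal.{0}) (p : Tagged) : Set TreeSpace :=
  {T | T ∈ Rset β ∧ ∀ x ∈ p, T.1 x.1 = true ∧ treeRank T x.1 = x.2}

/-- The `β`-topology on `R_β`, generated by the basic sets `N^β_p` for `p ∈ P_β`. -/
noncomputable def betaTop (β : Ordinal.{0}) : TopologicalSpace ↥(Rset β) :=
  TopologicalSpace.generateFrom
    {U : Set ↥(Rset β) | ∃ p ∈ Pfin β, U = {T : ↥(Rset β) | (T : TreeSpace) ∈ Nset β p}}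

/-- `p ⊩_β A`: `A ∩ N^β_p` is comeager in `N^β_p` with respect to the `β`-topology. -/
def Forces (β : Ordinal.{0}) (p : Tagged) (A : Set TreeSpace) : Prop :=
  {x : ↥{T : ↥(Rset β) | (T : TreeSpace) ∈ Nset β p} |
      ((x : ↥(Rset β)) : TreeSpace) ∈ A} ∈
    @residual ↥{T : ↥(Rset β) | (T : TreeSpace) ∈ Nset β p}
      (TopologicalSpace.induced Subtype.val (betaTop β))

/-- `p ~_α q` for finite tagged trees: same underlying tree, and tags agree whenever
either tag is an ordinal less than `α`. -/
def TagSim (α : Ordinal.{0}) (p q : Tagged) : Prop :=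
  p.dom = q.dom ∧ ∀ s h h', (s, h) ∈ p → (s, h') ∈ q →
    (h < (α : WithTop Ordinal.{0}) ∨ h' < (α : WithTop Ordinal.{0})) → h = h'

/-- The type `β ∪ {∞}` of possible tags of a `β`-tagged tree. -/
abbrev TagVal (β : Ordinal.{0}) : Type 1 :=
  {o : WithTop Ordinal.{0} // o = ⊤ ∨ o < (β : WithTop Ordinal.{0})}

/-- The power set of `Seq × (β ∪ {∞})` with the Cantor topology (sets coded by
characteristic functions). -/
abbrev TagFun (β : Ordinal.{0}) : Type 1 := List ℕ × TagVal β → Bool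

/-- The tagged tree (set of pairs) coded by an element of `TagFun β`. -/
def toTagged {β : Ordinal.{0}} (F : TagFun β) : Tagged :=
  {x | ∃ w : TagVal β, F (x.1, w) = true ∧ (w : WithTop Ordinal.{0}) = x.2}

/-- `𝒯_β`: the set of `β`-tagged trees, as a subset of the power set of
`Seq × (β ∪ {∞})`. -/
def TagTreeSet (β : Ordinal.{0}) : Set (TagFun β) := {F | IsTagged (toTagged F)}

/-- `S_β = {(T,H) ∈ 𝒯_β : T ∈ 𝒯' and H = rk_T}`. -/
def Sset (β : Ordinal.{0}) : Set (TagFun β) :=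
  {F | IsTagged (toTagged F) ∧ ∃ T : TreeSpace, T ∈ GTreeSet ∧
    toTagged F = {x | T.1 x.1 = true ∧ treeRank T x.1 = x.2}}

section Aux1

open Classical in
/-- membership in `toTagged` via a `TagVal`. -/
lemma mem_toTagged_iff {β : Ordinal.{0}} (F : TagFun β) (s : List ℕ) (w : TagVal β) :
    (s, (w : WithTop Ordinal.{0})) ∈ toTagged F ↔ F (s, w) = true := by
  constructor
  · rintro ⟨w', hw', hww⟩
    rwa [show w = w' from Subtype.ext hww.symm]
  · intro h
    exact ⟨w, h, rfl⟩

lemma toTagged_injective {β : Ordinal.{0}} : Function.Injective (toTagged (β := β)) := by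
  intro F F' h
  funext c
  obtain ⟨s, w⟩ := c
  have : F (s, w) = true ↔ F' (s, w) = true := by
    rw [← mem_toTagged_iff, ← mem_toTagged_iff, h]
  cases hF : F (s, w) <;> cases hF' : F' (s, w) <;> simp_all

lemma mem_dom_toTagged_iff {β : Ordinal.{0}} (F : TagFun β) (s : List ℕ) :
    s ∈ (toTagged F).dom ↔ ∃ w : TagVal β, F (s, w) = true := by
  constructor
  · rintro ⟨⟨s', o⟩, ⟨w, hw, hwo⟩, rfl⟩
    exact ⟨w, hw⟩
  · rintro ⟨w, hw⟩
    exact ⟨(s, (w : WithTop Ordinal.{0})), ⟨w, hw, rfl⟩, rfl⟩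

/-! ### treeRank API -/

lemma treeRank_of_acc {T : TreeSpace} {s : List ℕ} (h : Acc (childRel T.1) s) :
    treeRank T s = (h.rank : Ordinal.{0}) := by
  rw [treeRank, dif_pos h]

lemma treeRank_of_not_acc {T : TreeSpace} {s : List ℕ} (h : ¬ Acc (childRel T.1) s) :
    treeRank T s = ⊤ := by
  rw [treeRank, dif_neg h]

lemma treeRank_eq_top_iff {T : TreeSpace} {s : List ℕ} :
    treeRank T s = ⊤ ↔ ¬ Acc (childRel T.1) s := by
  constructor
  · intro h hacc
    rw [treeRank_of_acc hacc] at h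
    exact (WithTop.coe_ne_top h).elim
  · exact treeRank_of_not_acc

lemma exists_child_not_acc {T : TreeSpace} {s : List ℕ} (h : ¬ Acc (childRel T.1) s) :
    ∃ n, T.1 (s ++ [n]) = true ∧ ¬ Acc (childRel T.1) (s ++ [n]) := by
  by_contra hc
  push_neg at hc
  exact h (Acc.intro s (by rintro t ⟨ht, n, rfl⟩; exact hc n ht))

lemma exists_child_rank_ge {T : TreeSpace} {s : List ℕ} (h : Acc (childRel T.1) s)
    {γ : Ordinal.{0}} (hγ : γ < h.rank) :
    ∃ (t : List ℕ) (ht : childRel T.1 t s), γ ≤ (h.inv ht).rank := by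
  rw [h.rank_eq, Ordinal.lt_iSup_iff] at hγ
  obtain ⟨⟨t, ht⟩, hlt⟩ := hγ
  exact ⟨t, ht, Order.lt_succ_iff.mp hlt⟩

lemma rank_le_of_children {T : TreeSpace} {s : List ℕ} (h : Acc (childRel T.1) s)
    {α : Ordinal.{0}} (H : ∀ (t : List ℕ) (ht : childRel T.1 t s), (h.inv ht).rank < α) :
    h.rank ≤ α := by
  rw [h.rank_eq]
  exact Ordinal.iSup_le fun ⟨t, ht⟩ => Order.succ_le_iff.mpr (H t ht)

lemma acc_of_no_child {T : TreeSpace} {s : List ℕ} (H : ∀ n, T.1 (s ++ [n]) = false) :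
    Acc (childRel T.1) s := by
  refine Acc.intro s ?_
  rintro t ⟨ht, n, rfl⟩
  rw [H n] at ht
  exact absurd ht (by simp)

lemma rank_eq_zero_of_no_child {T : TreeSpace} {s : List ℕ} (h : Acc (childRel T.1) s)
    (H : ∀ n, T.1 (s ++ [n]) = false) : h.rank = 0 := by
  haveI : IsEmpty { b // childRel T.1 b s } := by
    refine ⟨?_⟩
    rintro ⟨t, ht, n, rfl⟩
    rw [H n] at ht
    exact absurd ht (by simp)
  rw [h.rank_eq, ciSup_of_empty]
  rfl

lemma rank_pos_of_child {T : TreeSpace} {s t : List ℕ} (h : Acc (childRel T.1) s)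
    (ht : childRel T.1 t s) : 0 < h.rank := by
  calc (0 : Ordinal.{0}) ≤ (h.inv ht).rank := zero_le
  _ < h.rank := h.rank_lt_of_rel ht

/-- Monotonicity of rank along extensions within the tree. -/
lemma acc_rank_lt_of_append {T : TreeSpace} :
    ∀ (u t : List ℕ), u ≠ [] → T.1 (t ++ u) = true → ∀ (h : Acc (childRel T.1) t),
    ∃ h2 : Acc (childRel T.1) (t ++ u), h2.rank < h.rank := by
  intro u
  induction u with
  | nil => exact fun t h => absurd rfl h
  | cons a u' ih =>
    intro t _ hmem h
    have hta : T.1 (t ++ [a]) = true := by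
      refine T.2 (t ++ (a :: u')) (t ++ [a]) ⟨u', by simp⟩ hmem
    have hchild : childRel T.1 (t ++ [a]) t := ⟨hta, a, rfl⟩
    have h' : Acc (childRel T.1) (t ++ [a]) := h.inv hchild
    have hlt : h'.rank < h.rank := h.rank_lt_of_rel hchild
    rcases eq_or_ne u' [] with rfl | hne
    · exact ⟨by simpa using h', by convert hlt using 2 <;> simp⟩
    · have hmem' : T.1 ((t ++ [a]) ++ u') = true := by simpa using hmem
      obtain ⟨h2, hlt2⟩ := ih (t ++ [a]) hne hmem' h'
      refine ⟨by simpa using h2, ?_⟩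
      calc _ = h2.rank := by congr 1 <;> simp
      _ < h'.rank := hlt2
      _ < h.rank := hlt

lemma treeRank_lt_of_prefix {T : TreeSpace} {t s : List ℕ} (hts : t <+: s) (hne : t ≠ s)
    (hs : T.1 s = true) (hacc : treeRank T t ≠ ⊤) : treeRank T s < treeRank T t := by
  have ht : Acc (childRel T.1) t := by
    by_contra hc
    exact hacc (treeRank_of_not_acc hc)
  obtain ⟨u, rfl⟩ := hts
  have hu : u ≠ [] := by rintro rfl; simp at hne
  obtain ⟨h2, hlt⟩ := acc_rank_lt_of_append u t hu hs ht
  rw [treeRank_of_acc h2, treeRank_of_acc ht]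
  exact_mod_cast hlt

lemma treeRank_prefix_cases {T : TreeSpace} {t s : List ℕ} (hts : t <+: s) (hne : t ≠ s)
    (hs : T.1 s = true) : treeRank T t = ⊤ ∨ treeRank T s < treeRank T t := by
  by_cases h : treeRank T t = ⊤
  · exact Or.inl h
  · exact Or.inr (treeRank_lt_of_prefix hts hne hs h)

end Aux1
section Aux2

/-- The graph of the rank function of a tree. -/
def rkGraph (T : TreeSpace) : Tagged :=
  {x | T.1 x.1 = true ∧ treeRank T x.1 = x.2}

lemma mem_dom_rkGraph {T : TreeSpace} {s : List ℕ} :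
    s ∈ (rkGraph T).dom ↔ T.1 s = true := by
  constructor
  · rintro ⟨⟨s', o⟩, ⟨h1, h2⟩, rfl⟩
    exact h1
  · intro h
    exact ⟨(s, treeRank T s), ⟨h, rfl⟩, rfl⟩

lemma isTagged_rkGraph (T : TreeSpace) : IsTagged (rkGraph T) := by
  refine ⟨?_, ?_, ?_⟩
  · rintro s h h' ⟨-, h1⟩ ⟨-, h2⟩
    exact h1.symm.trans h2
  · intro s t hts hs
    rw [mem_dom_rkGraph] at hs ⊢
    exact T.2 s t hts hs
  · rintro s h t h' ⟨hs, h1⟩ ⟨ht, h2⟩ hts hne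
    simp only [] at h1 h2
    rw [← h1, ← h2]
    exact treeRank_prefix_cases hts hne hs

lemma rkGraph_injective : Function.Injective rkGraph := by
  intro T T' h
  refine Subtype.ext (funext fun s => ?_)
  have : T.1 s = true ↔ T'.1 s = true := by
    rw [← mem_dom_rkGraph, ← mem_dom_rkGraph, h]
  cases hT : T.1 s <;> cases hT' : T'.1 s <;> simp_all

open Classical in
/-- The canonical element of `TagFun β` coding the rank graph of a tree. -/
noncomputable def invF (β : Ordinal.{0}) (T : TreeSpace) : TagFun β :=
  fun c => T.1 c.1 && decide (treeRank T c.1 = (c.2 : WithTop Ordinal.{0}))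

lemma invF_eq_true_iff {β : Ordinal.{0}} {T : TreeSpace} {c : List ℕ × TagVal β} :
    invF β T c = true ↔ T.1 c.1 = true ∧ treeRank T c.1 = (c.2 : WithTop Ordinal.{0}) := by
  simp [invF]

lemma toTagged_invF {β : Ordinal.{0}} {T : TreeSpace} (hT : T ∈ Rset β) :
    toTagged (invF β T) = rkGraph T := by
  ext ⟨s, o⟩
  constructor
  · rintro ⟨w, hw, rfl⟩
    exact invF_eq_true_iff.mp hw
  · rintro ⟨hs, hr⟩
    have hw : o = ⊤ ∨ o < (β : WithTop Ordinal.{0}) := by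
      have := hT.2 s hs
      simp only [] at hr
      rwa [hr] at this
    exact ⟨⟨o, hw⟩, invF_eq_true_iff.mpr ⟨hs, hr⟩, rfl⟩

lemma treeRank_mem_tagval {β : Ordinal.{0}} {T : TreeSpace} (hT : T ∈ Rset β) {s : List ℕ}
    (hs : T.1 s = true) : treeRank T s = ⊤ ∨ treeRank T s < (β : WithTop Ordinal.{0}) :=
  hT.2 s hs

lemma invF_mem_Sset {β : Ordinal.{0}} {T : TreeSpace} (hT : T ∈ Rset β) :
    invF β T ∈ Sset β := by
  refine ⟨?_, T, hT.1, toTagged_invF hT⟩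
  rw [show IsTagged (toTagged (invF β T)) = IsTagged (rkGraph T) from
    congrArg _ (toTagged_invF hT)]
  exact isTagged_rkGraph T

/-- The tree associated to an element of `Sset β`, by choice. -/
noncomputable def ssetTree {β : Ordinal.{0}} {F : TagFun β} (hF : F ∈ Sset β) : TreeSpace :=
  hF.2.choose

lemma ssetTree_spec {β : Ordinal.{0}} {F : TagFun β} (hF : F ∈ Sset β) :
    ssetTree hF ∈ GTreeSet ∧ toTagged F = rkGraph (ssetTree hF) :=
  hF.2.choose_spec

lemma ssetTree_mem_Rset {β : Ordinal.{0}} {F : TagFun β} (hF : F ∈ Sset β) :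
    ssetTree hF ∈ Rset β := by
  obtain ⟨hG, hgr⟩ := ssetTree_spec hF
  refine ⟨hG, fun s hs => ?_⟩
  have : (s, treeRank (ssetTree hF) s) ∈ rkGraph (ssetTree hF) := ⟨hs, rfl⟩
  rw [← hgr] at this
  obtain ⟨w, hw, hwe⟩ := this
  have := w.2
  simp only [] at hwe
  rwa [hwe] at this

end Aux2
section Aux3

variable {β : Ordinal.{0}}

/-- The top tag. -/
def wtop (β : Ordinal.{0}) : TagVal β := ⟨⊤, Or.inl rfl⟩

def CondA (F : TagFun β) : Prop := ∃ w : TagVal β, F ([], w) = true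

def CondB (F : TagFun β) : Prop := ∀ (s : List ℕ) (n m : ℕ),
  ((∃ w : TagVal β, F (s ++ [n], w) = true) ↔ (∃ w : TagVal β, F (s ++ [m], w) = true))

def CondI (F : TagFun β) : Prop :=
  ∀ s : List ℕ, F (s, wtop β) = true → ∃ n, F (s ++ [n], wtop β) = true

def CondII (F : TagFun β) : Prop := ∀ (s : List ℕ) (w γ : TagVal β),
  F (s, w) = true → (γ : WithTop Ordinal.{0}) < (w : WithTop Ordinal.{0}) →
  (w : WithTop Ordinal.{0}) ≠ ⊤ →
  ∃ (n : ℕ) (w' : TagVal β), (γ : WithTop Ordinal.{0}) ≤ (w' : WithTop Ordinal.{0}) ∧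
    F (s ++ [n], w') = true

open Classical in
/-- The underlying tree function of a tagged tree code. -/
noncomputable def domFun (F : TagFun β) : List ℕ → Bool :=
  fun s => decide (∃ w : TagVal β, F (s, w) = true)

lemma domFun_eq_true_iff {F : TagFun β} {s : List ℕ} :
    domFun F s = true ↔ ∃ w : TagVal β, F (s, w) = true := by
  simp [domFun]

lemma isTreeFun_domFun {F : TagFun β} (hF : IsTagged (toTagged F)) :
    IsTreeFun (domFun F) := by
  intro s t hts hs
  rw [domFun_eq_true_iff, ← mem_dom_toTagged_iff] at hs ⊢
  exact hF.2.1 s t hts hs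

/-- The tree associated to a tagged tree code. -/
noncomputable def domTree {F : TagFun β} (hF : IsTagged (toTagged F)) : TreeSpace :=
  ⟨domFun F, isTreeFun_domFun hF⟩

lemma self_ne_append {s : List ℕ} {n : ℕ} : s ≠ s ++ [n] := by
  intro h
  simpa using congrArg List.length h

/-- Tag of a child is strictly below an ordinal tag of its parent. -/
lemma child_tag_lt {F : TagFun β} (hF : IsTagged (toTagged F)) {s : List ℕ} {n : ℕ}
    {w wc : TagVal β} (hw : F (s, w) = true) (hwc : F (s ++ [n], wc) = true)
    (htop : (w : WithTop Ordinal.{0}) ≠ ⊤) :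
    (wc : WithTop Ordinal.{0}) < (w : WithTop Ordinal.{0}) := by
  have h1 := (mem_toTagged_iff F s w).mpr hw
  have h2 := (mem_toTagged_iff F (s ++ [n]) wc).mpr hwc
  rcases hF.2.2 (s ++ [n]) wc s w h2 h1 (s.prefix_append [n]) self_ne_append with h | h
  · exact absurd h htop
  · exact h

lemma not_acc_of_top {F : TagFun β} (hF : IsTagged (toTagged F)) (hI : CondI F)
    {s : List ℕ} (hs : F (s, wtop β) = true) : ¬ Acc (childRel (domFun F)) s := by
  intro hacc
  revert hs
  induction hacc with
  | intro s h ih =>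
    intro hs
    obtain ⟨n, hn⟩ := hI s hs
    exact ih (s ++ [n]) ⟨domFun_eq_true_iff.mpr ⟨wtop β, hn⟩, n, rfl⟩ hn

lemma acc_rank_of_ord {F : TagFun β} (hF : IsTagged (toTagged F)) (hII : CondII F) :
    ∀ (α : Ordinal.{0}) (s : List ℕ) (w : TagVal β), F (s, w) = true →
      (w : WithTop Ordinal.{0}) = (α : WithTop Ordinal.{0}) →
      ∃ h : Acc (childRel (domFun F)) s, h.rank = α := by
  intro α
  induction α using Ordinal.induction with
  | h α IH =>
    intro s w hw hwα
    -- every tagged child has an ordinal tag < α, hence is accessible with rank < α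
    have hchild : ∀ (n : ℕ) (wc : TagVal β), F (s ++ [n], wc) = true →
        ∃ (αt : Ordinal.{0}) (ht : Acc (childRel (domFun F)) (s ++ [n])),
          (wc : WithTop Ordinal.{0}) = (αt : WithTop Ordinal.{0}) ∧ αt < α ∧ ht.rank = αt := by
      intro n wc hwc
      have hlt : (wc : WithTop Ordinal.{0}) < (w : WithTop Ordinal.{0}) :=
        child_tag_lt hF hw hwc (by rw [hwα]; exact WithTop.coe_ne_top)
      rw [hwα] at hlt
      obtain ⟨αt, wcv⟩ := WithTop.ne_top_iff_exists.mp (ne_top_of_lt hlt)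
      rw [← wcv, WithTop.coe_lt_coe] at hlt
      obtain ⟨ht, hrank⟩ := IH αt hlt (s ++ [n]) wc hwc wcv.symm
      exact ⟨αt, ht, wcv.symm, hlt, hrank⟩
    have hchild' : ∀ (t : List ℕ), childRel (domFun F) t s →
        Acc (childRel (domFun F)) t := by
      rintro t ⟨htmem, n, rfl⟩
      obtain ⟨wc, hwc⟩ := domFun_eq_true_iff.mp htmem
      obtain ⟨αt, ht, -, -, -⟩ := hchild n wc hwc
      exact ht
    have hacc : Acc (childRel (domFun F)) s := Acc.intro s hchild'
    refine ⟨hacc, le_antisymm ?_ ?_⟩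
    · refine rank_le_of_children (T := domTree hF) hacc ?_
      rintro t ht
      obtain ⟨htmem, n, hteq⟩ := id ht
      subst hteq
      obtain ⟨wc, hwc⟩ := domFun_eq_true_iff.mp htmem
      obtain ⟨αt, hat, -, hlt, hrank⟩ := hchild n wc hwc
      have : (hacc.inv ht).rank = αt := by rw [← hrank]
      refine this.trans_lt ?_
      exact hlt
    · refine le_of_forall_lt fun γ hγ => ?_
      have hαβ : (α : WithTop Ordinal.{0}) < (β : WithTop Ordinal.{0}) := by
        rcases w.2 with h | h
        · rw [hwα] at h; exact absurd h (by simp)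
        · rwa [hwα] at h
      have hγβ : (γ : WithTop Ordinal.{0}) < (β : WithTop Ordinal.{0}) :=
        lt_trans (by exact_mod_cast hγ) hαβ
      obtain ⟨n, w', hgw', hw'⟩ := hII s w ⟨(γ : WithTop Ordinal.{0}), Or.inr hγβ⟩ hw
        (by rw [hwα]; show (γ : WithTop Ordinal.{0}) < (α : WithTop Ordinal.{0}); exact_mod_cast hγ)
        (by rw [hwα]; exact WithTop.coe_ne_top)
      obtain ⟨αt, hat, hwv, hlt, hrank⟩ := hchild n w' hw'
      have hγαt : γ ≤ αt := by
        have hgw2 : (γ : WithTop Ordinal.{0}) ≤ (w' : WithTop Ordinal.{0}) := hgw'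
        rw [hwv] at hgw2
        exact_mod_cast hgw2
      have hchd : childRel (domFun F) (s ++ [n]) s :=
        ⟨domFun_eq_true_iff.mpr ⟨w', hw'⟩, n, rfl⟩
      calc γ ≤ αt := hγαt
      _ = (hacc.inv hchd).rank := by rw [← hrank]
      _ < hacc.rank := hacc.rank_lt_of_rel hchd

end Aux3
section Aux4

variable {β : Ordinal.{0}}

/-- Under the four conditions, every tag equals the rank. -/
lemma tag_eq_rank {F : TagFun β} (hF : IsTagged (toTagged F)) (hI : CondI F) (hII : CondII F)
    {s : List ℕ} {w : TagVal β} (hw : F (s, w) = true) :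
    treeRank (domTree hF) s = (w : WithTop Ordinal.{0}) := by
  rcases eq_or_ne (w : WithTop Ordinal.{0}) ⊤ with htop | hne
  · have : w = wtop β := Subtype.ext htop
    rw [htop, treeRank_eq_top_iff]
    exact not_acc_of_top hF hI (this ▸ hw)
  · obtain ⟨α, hα⟩ := WithTop.ne_top_iff_exists.mp hne
    obtain ⟨h, hrank⟩ := acc_rank_of_ord hF hII α s w hw hα.symm
    rw [treeRank_of_acc (T := domTree hF) h]
    exact (congrArg (fun x : Ordinal.{0} => (x : WithTop Ordinal.{0})) hrank).trans hα

lemma toTagged_eq_rkGraph {F : TagFun β} (hF : IsTagged (toTagged F)) (hI : CondI F)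
    (hII : CondII F) : toTagged F = rkGraph (domTree hF) := by
  ext ⟨s, o⟩
  constructor
  · rintro ⟨w, hw, hwo⟩
    refine ⟨domFun_eq_true_iff.mpr ⟨w, hw⟩, ?_⟩
    show treeRank (domTree hF) s = o
    rw [tag_eq_rank hF hI hII hw, hwo]
  · rintro ⟨hs, hr⟩
    obtain ⟨w, hw⟩ := domFun_eq_true_iff.mp hs
    refine ⟨w, hw, ?_⟩
    show (w : WithTop Ordinal.{0}) = o
    have := tag_eq_rank hF hI hII hw
    simp only [] at hr
    rw [← hr, this]

lemma domTree_mem_GTreeSet {F : TagFun β} (hF : IsTagged (toTagged F)) (hA : CondA F)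
    (hB : CondB F) : domTree hF ∈ GTreeSet := by
  constructor
  · exact domFun_eq_true_iff.mpr hA
  · intro s n m
    have := hB s n m
    show domFun F (s ++ [n]) = domFun F (s ++ [m])
    by_cases h : ∃ w : TagVal β, F (s ++ [n], w) = true
    · rw [domFun_eq_true_iff.mpr h, domFun_eq_true_iff.mpr (this.mp h)]
    · have h1 : domFun F (s ++ [n]) = false := by
        cases hc : domFun F (s ++ [n])
        · rfl
        · exact absurd (domFun_eq_true_iff.mp hc) h
      have h2 : domFun F (s ++ [m]) = false := by
        cases hc : domFun F (s ++ [m])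
        · rfl
        · exact absurd (this.mpr (domFun_eq_true_iff.mp hc)) h
      rw [h1, h2]

/-- The main characterization of `Sset β` inside `TagTreeSet β`. -/
lemma sset_iff {F : TagFun β} (hF : IsTagged (toTagged F)) :
    F ∈ Sset β ↔ CondA F ∧ CondB F ∧ CondI F ∧ CondII F := by
  constructor
  · rintro ⟨-, T, hGT, hgr⟩
    have hgr' : toTagged F = rkGraph T := hgr
    have hmem : ∀ (s : List ℕ) (w : TagVal β), F (s, w) = true ↔
        (T.1 s = true ∧ treeRank T s = (w : WithTop Ordinal.{0})) := by
      intro s w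
      rw [← mem_toTagged_iff, hgr']
      exact Iff.rfl
    have hdom : ∀ s : List ℕ, (∃ w : TagVal β, F (s, w) = true) ↔ T.1 s = true := by
      intro s
      constructor
      · rintro ⟨w, hw⟩; exact ((hmem s w).mp hw).1
      · intro hs
        have hw : treeRank T s = ⊤ ∨ treeRank T s < (β : WithTop Ordinal.{0}) := by
          have : (s, treeRank T s) ∈ rkGraph T := ⟨hs, rfl⟩
          rw [← hgr'] at this
          obtain ⟨w, hw, hwe⟩ := this
          have := w.2
          simp only [] at hwe
          rwa [hwe] at this
        exact ⟨⟨treeRank T s, hw⟩, (hmem s _).mpr ⟨hs, rfl⟩⟩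
    refine ⟨?_, ?_, ?_, ?_⟩
    · exact (hdom []).mpr hGT.1
    · intro s n m
      rw [hdom, hdom, hGT.2 s n m]
    · intro s hs
      obtain ⟨hsT, hrk⟩ := (hmem s (wtop β)).mp hs
      have hnacc : ¬ Acc (childRel T.1) s := treeRank_eq_top_iff.mp hrk
      obtain ⟨n, hn, hnacc'⟩ := exists_child_not_acc hnacc
      refine ⟨n, (hmem _ (wtop β)).mpr ⟨hn, treeRank_of_not_acc hnacc'⟩⟩
    · intro s w γ hw hγw hwtop
      obtain ⟨hsT, hrk⟩ := (hmem s w).mp hw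
      obtain ⟨α, hα⟩ := WithTop.ne_top_iff_exists.mp hwtop
      have hacc : Acc (childRel T.1) s := by
        by_contra hc
        rw [treeRank_of_not_acc hc] at hrk
        exact hwtop hrk.symm
      have hrank : (hacc.rank : WithTop Ordinal.{0}) = (w : WithTop Ordinal.{0}) := by
        rw [← treeRank_of_acc hacc, hrk]
      have hγtop : (γ : WithTop Ordinal.{0}) ≠ ⊤ := ne_top_of_lt hγw
      obtain ⟨g, hg⟩ := WithTop.ne_top_iff_exists.mp hγtop
      have hglt : g < hacc.rank := by
        have : (g : WithTop Ordinal.{0}) < (hacc.rank : WithTop Ordinal.{0}) := by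
          rw [hg, hrank]; exact hγw
        exact_mod_cast this
      obtain ⟨t, ht, hge⟩ := exists_child_rank_ge hacc hglt
      obtain ⟨htT, n, rfl⟩ := id ht
      have hrt : treeRank T (s ++ [n]) = ((hacc.inv ht).rank : Ordinal.{0}) :=
        treeRank_of_acc _
      have hmemw : treeRank T (s ++ [n]) = ⊤ ∨ treeRank T (s ++ [n]) < (β : WithTop Ordinal.{0}) := by
        have : (s ++ [n], treeRank T (s ++ [n])) ∈ rkGraph T := ⟨htT, rfl⟩
        rw [← hgr'] at this
        obtain ⟨w', hw', hwe⟩ := this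
        have := w'.2
        simp only [] at hwe
        rwa [hwe] at this
      refine ⟨n, ⟨treeRank T (s ++ [n]), hmemw⟩, ?_, (hmem _ _).mpr ⟨htT, rfl⟩⟩
      show (γ : WithTop Ordinal.{0}) ≤ treeRank T (s ++ [n])
      rw [← hg, hrt]
      exact_mod_cast hge
  · rintro ⟨hA, hB, hI, hII⟩
    exact ⟨hF, domTree hF, domTree_mem_GTreeSet hF hA hB, toTagged_eq_rkGraph hF hI hII⟩

end Aux4
section Aux5

open Classical in
lemma tagval_countable {β : Ordinal.{0}} (hβ : β < ω₁) : Countable (TagVal β) := by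
  have hcard : (Set.Iio β).Countable := by
    rw [Cardinal.countable_iff_lt_aleph_one]
    rw [Ordinal.mk_Iio_ordinal]
    rw [Cardinal.lift_lt_aleph_one]
    rw [← Cardinal.ord_aleph] at hβ
    exact Cardinal.lt_ord.mp hβ
  haveI : Countable (Set.Iio β) := hcard.to_subtype
  refine Function.Injective.countable
    (f := fun w : TagVal β => if h : (w : WithTop Ordinal.{0}) = ⊤ then
      (none : Option (Set.Iio β))
      else some ⟨(w : WithTop Ordinal.{0}).untop h, ?_⟩) ?_
  · have := w.2
    rcases this with h' | h'
    · exact absurd h' h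
    · have : ((w : WithTop Ordinal.{0}).untop h : WithTop Ordinal.{0}) = w :=
        WithTop.coe_untop _ h
      rw [Set.mem_Iio, ← WithTop.coe_lt_coe, this]
      exact h'
  · intro w w' h
    by_cases h1 : (w : WithTop Ordinal.{0}) = ⊤ <;>
      by_cases h2 : (w' : WithTop Ordinal.{0}) = ⊤ <;> simp [h1, h2] at h
    · exact Subtype.ext (h1.trans h2.symm)
    · refine Subtype.ext ?_
      rw [← WithTop.coe_untop _ h1, ← WithTop.coe_untop _ h2, h]

variable {β : Ordinal.{0}}

lemma continuous_coord (c : List ℕ × TagVal β) :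
    Continuous (fun x : ↥(TagTreeSet β) => (x : TagFun β) c) :=
  (continuous_apply c).comp continuous_subtype_val

lemma isOpen_coord_true (c : List ℕ × TagVal β) :
    IsOpen {x : ↥(TagTreeSet β) | (x : TagFun β) c = true} := by
  have : {x : ↥(TagTreeSet β) | (x : TagFun β) c = true} =
      (fun x : ↥(TagTreeSet β) => (x : TagFun β) c) ⁻¹' {true} := by
    ext x; simp
  rw [this]
  exact (isOpen_discrete _).preimage (continuous_coord c)

lemma isOpen_coord_false (c : List ℕ × TagVal β) :
    IsOpen {x : ↥(TagTreeSet β) | (x : TagFun β) c = false} := by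
  have : {x : ↥(TagTreeSet β) | (x : TagFun β) c = false} =
      (fun x : ↥(TagTreeSet β) => (x : TagFun β) c) ⁻¹' {false} := by
    ext x; simp
  rw [this]
  exact (isOpen_discrete _).preimage (continuous_coord c)

lemma isGδ_sset (hβ : β < ω₁) :
    IsGδ (Subtype.val ⁻¹' Sset β : Set ↥(TagTreeSet β)) := by
  haveI := tagval_countable hβ
  have hchar : (Subtype.val ⁻¹' Sset β : Set ↥(TagTreeSet β)) =
      {x : ↥(TagTreeSet β) | CondA (x : TagFun β)} ∩ {x : ↥(TagTreeSet β) | CondB (x : TagFun β)} ∩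
      {x : ↥(TagTreeSet β) | CondI (x : TagFun β)} ∩ {x : ↥(TagTreeSet β) | CondII (x : TagFun β)} := by
    refine Set.ext fun x => ?_
    have := sset_iff (β := β) (F := (x : TagFun β)) x.2
    simp only [Set.mem_preimage, Set.mem_inter_iff, Set.mem_setOf_eq]
    rw [this]
    tauto
  rw [hchar]
  refine ((IsGδ.inter ?_ ?_).inter ?_).inter ?_
  · -- CondA : open
    refine IsOpen.isGδ ?_
    have : {x : ↥(TagTreeSet β) | CondA (x : TagFun β)} =
        ⋃ w : TagVal β, {x : ↥(TagTreeSet β) | (x : TagFun β) ([], w) = true} := by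
      ext x; simp [CondA, Set.mem_iUnion]
    rw [this]
    exact isOpen_iUnion fun w => isOpen_coord_true _
  · -- CondB : Gδ
    have : {x : ↥(TagTreeSet β) | CondB (x : TagFun β)} =
        ⋂ (c : List ℕ × ℕ × ℕ),
          ((⋃ w : TagVal β, {x : ↥(TagTreeSet β) | (x : TagFun β) (c.1 ++ [c.2.1], w) = true}) ∩
           (⋃ w : TagVal β, {x : ↥(TagTreeSet β) | (x : TagFun β) (c.1 ++ [c.2.2], w) = true})) ∪
          (⋂ w : TagVal β, ({x : ↥(TagTreeSet β) | (x : TagFun β) (c.1 ++ [c.2.1], w) = false} ∩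
            {x : ↥(TagTreeSet β) | (x : TagFun β) (c.1 ++ [c.2.2], w) = false})) := by
      refine Set.ext fun x => ?_
      simp only [CondB, Set.mem_setOf_eq, Set.mem_iInter, Set.mem_union, Set.mem_inter_iff,
        Set.mem_iUnion]
      constructor
      · intro h c
        by_cases hn : ∃ w : TagVal β, (x : TagFun β) (c.1 ++ [c.2.1], w) = true
        · exact Or.inl ⟨hn, (h c.1 c.2.1 c.2.2).mp hn⟩
        · refine Or.inr fun w => ⟨?_, ?_⟩
          · cases hc : (x : TagFun β) (c.1 ++ [c.2.1], w)
            · rfl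
            · exact absurd ⟨w, hc⟩ hn
          · cases hc : (x : TagFun β) (c.1 ++ [c.2.2], w)
            · rfl
            · exact absurd ((h c.1 c.2.1 c.2.2).mpr ⟨w, hc⟩) hn
      · intro h s n m
        rcases h (s, n, m) with ⟨h1, h2⟩ | h3
        · exact ⟨fun _ => h2, fun _ => h1⟩
        · constructor
          · rintro ⟨w, hw⟩
            rw [(h3 w).1] at hw
            simp at hw
          · rintro ⟨w, hw⟩
            rw [(h3 w).2] at hw
            simp at hw
    rw [this]
    refine IsGδ.iInter fun c => IsGδ.union ?_ ?_
    · exact ((isOpen_iUnion fun w => isOpen_coord_true _).inter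
        (isOpen_iUnion fun w => isOpen_coord_true _)).isGδ
    · exact IsGδ.iInter fun w =>
        ((isOpen_coord_false _).inter (isOpen_coord_false _)).isGδ
  · -- CondI : Gδ
    have : {x : ↥(TagTreeSet β) | CondI (x : TagFun β)} =
        ⋂ s : List ℕ, ({x : ↥(TagTreeSet β) | (x : TagFun β) (s, wtop β) = false} ∪
          ⋃ n : ℕ, {x : ↥(TagTreeSet β) | (x : TagFun β) (s ++ [n], wtop β) = true}) := by
      refine Set.ext fun x => ?_
      simp only [CondI, Set.mem_setOf_eq, Set.mem_iInter, Set.mem_union, Set.mem_iUnion]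
      refine forall_congr' fun s => ?_
      constructor
      · intro h
        cases hc : (x : TagFun β) (s, wtop β)
        · exact Or.inl rfl
        · exact Or.inr (h hc)
      · rintro (h | h) hs
        · rw [h] at hs; simp at hs
        · exact h
    rw [this]
    exact IsGδ.iInter fun s => ((isOpen_coord_false _).union
      (isOpen_iUnion fun n => isOpen_coord_true _)).isGδ
  · -- CondII : Gδ
    have : {x : ↥(TagTreeSet β) | CondII (x : TagFun β)} =
        ⋂ (c : List ℕ × TagVal β × TagVal β),
          {x : ↥(TagTreeSet β) |
            ((c.2.2 : WithTop Ordinal.{0}) < (c.2.1 : WithTop Ordinal.{0}) ∧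
              (c.2.1 : WithTop Ordinal.{0}) ≠ ⊤) →
            ((x : TagFun β) (c.1, c.2.1) = false ∨
              ∃ (n : ℕ) (w' : TagVal β), (c.2.2 : WithTop Ordinal.{0}) ≤ (w' : WithTop Ordinal.{0}) ∧
                (x : TagFun β) (c.1 ++ [n], w') = true)} := by
      refine Set.ext fun x => ?_
      simp only [CondII, Set.mem_setOf_eq, Set.mem_iInter]
      constructor
      · rintro h ⟨s, w, γ⟩ ⟨h1, h2⟩
        cases hc : (x : TagFun β) (s, w)
        · exact Or.inl rfl
        · exact Or.inr (h s w γ hc h1 h2)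
      · intro h s w γ hw h1 h2
        rcases h (s, w, γ) ⟨h1, h2⟩ with h3 | h3
        · rw [h3] at hw; simp at hw
        · exact h3
    rw [this]
    refine IsGδ.iInter fun c => IsOpen.isGδ ?_
    set P := ((c.2.2 : WithTop Ordinal.{0}) < (c.2.1 : WithTop Ordinal.{0}) ∧
        (c.2.1 : WithTop Ordinal.{0}) ≠ ⊤) with hP
    set Q := fun x : ↥(TagTreeSet β) =>
        ((x : TagFun β) (c.1, c.2.1) = false ∨
          ∃ (n : ℕ) (w' : TagVal β), (c.2.2 : WithTop Ordinal.{0}) ≤ (w' : WithTop Ordinal.{0}) ∧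
            (x : TagFun β) (c.1 ++ [n], w') = true) with hQ
    have hQopen : IsOpen {x : ↥(TagTreeSet β) | Q x} := by
      have : {x : ↥(TagTreeSet β) | Q x} =
          {x : ↥(TagTreeSet β) | (x : TagFun β) (c.1, c.2.1) = false} ∪
          ⋃ (n : ℕ) (w' : TagVal β) (_ : (c.2.2 : WithTop Ordinal.{0}) ≤ (w' : WithTop Ordinal.{0})),
            {x : ↥(TagTreeSet β) | (x : TagFun β) (c.1 ++ [n], w') = true} := by
        refine Set.ext fun x => ?_
        simp only [hQ, Set.mem_setOf_eq, Set.mem_union, Set.mem_iUnion]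
        tauto
      rw [this]
      exact (isOpen_coord_false _).union (isOpen_iUnion fun n => isOpen_iUnion fun w' =>
        isOpen_iUnion fun _ => isOpen_coord_true _)
    by_cases hc : P
    · have : {x : ↥(TagTreeSet β) | P → Q x} = {x : ↥(TagTreeSet β) | Q x} :=
        Set.ext fun x => ⟨fun h => h hc, fun h _ => h⟩
      rw [this]
      exact hQopen
    · have : {x : ↥(TagTreeSet β) | P → Q x} = (Set.univ : Set ↥(TagTreeSet β)) := by
        refine Set.ext fun x => ?_
        simp only [Set.mem_setOf_eq, Set.mem_univ, iff_true]
        exact fun h => absurd h hc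
      rw [this]
      exact isOpen_univ

end Aux5
section Aux6

variable {β : Ordinal.{0}}

/-- The finite tagged tree of all prefixes of `s` with their ranks in `T0`. -/
noncomputable def prefTag (T0 : TreeSpace) (s : List ℕ) : Tagged :=
  (fun t => (t, treeRank T0 t)) '' {t | t <+: s}

lemma prefTag_finite (T0 : TreeSpace) (s : List ℕ) : (prefTag T0 s).Finite := by
  refine Set.Finite.image _ ?_
  have : {t | t <+: s} ⊆ ↑s.inits.toFinset := by
    intro t ht
    simp [List.mem_inits]
    exact ht
  exact Set.Finite.subset (Set.finite_coe_iff.mp (by infer_instance)) this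

lemma mem_prefTag_iff {T0 : TreeSpace} {s : List ℕ} {z : List ℕ × WithTop Ordinal.{0}} :
    z ∈ prefTag T0 s ↔ z.1 <+: s ∧ z.2 = treeRank T0 z.1 := by
  obtain ⟨z1, z2⟩ := z
  simp only [prefTag, Set.mem_image, Set.mem_setOf_eq, Prod.mk.injEq]
  constructor
  · rintro ⟨t, ht, rfl, h2⟩
    exact ⟨ht, h2.symm⟩
  · rintro ⟨h1, h2⟩
    exact ⟨z1, h1, rfl, h2.symm⟩

lemma mem_dom_prefTag {T0 : TreeSpace} {s t : List ℕ} :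
    t ∈ (prefTag T0 s).dom ↔ t <+: s := by
  constructor
  · rintro ⟨z, hz, rfl⟩
    exact (mem_prefTag_iff.mp hz).1
  · intro h
    exact ⟨(t, treeRank T0 t), mem_prefTag_iff.mpr ⟨h, rfl⟩, rfl⟩

lemma isTagged_prefTag {T0 : TreeSpace} {s : List ℕ} (hs : T0.1 s = true) :
    IsTagged (prefTag T0 s) := by
  refine ⟨?_, ?_, ?_⟩
  · rintro t h h' hz hz'
    exact ((mem_prefTag_iff.mp hz).2).trans ((mem_prefTag_iff.mp hz').2).symm
  · intro a t hta ha
    rw [mem_dom_prefTag] at ha ⊢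
    exact hta.trans ha
  · rintro a h t h' hz hz' hta hne
    have h1 := mem_prefTag_iff.mp hz
    have h2 := mem_prefTag_iff.mp hz'
    have haT : T0.1 a = true := T0.2 s a h1.1 hs
    have := treeRank_prefix_cases (T := T0) hta hne haT
    rw [show h = treeRank T0 a from h1.2, show h' = treeRank T0 t from h2.2]
    exact this

lemma prefTag_mem_Pfin {T0 : TreeSpace} (hT0 : T0 ∈ Rset β) {s : List ℕ}
    (hs : T0.1 s = true) : prefTag T0 s ∈ Pfin β := by
  refine ⟨prefTag_finite T0 s, isTagged_prefTag hs, ?_⟩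
  intro z hz
  obtain ⟨h1, h2⟩ := mem_prefTag_iff.mp hz
  rw [h2]
  exact hT0.2 z.1 (T0.2 s z.1 h1 hs)

lemma self_mem_Nset_prefTag {T0 : TreeSpace} (hT0 : T0 ∈ Rset β) {s : List ℕ}
    (hs : T0.1 s = true) : T0 ∈ Nset β (prefTag T0 s) := by
  refine ⟨hT0, fun z hz => ?_⟩
  obtain ⟨h1, h2⟩ := mem_prefTag_iff.mp hz
  exact ⟨T0.2 s z.1 h1 hs, h2.symm⟩

lemma rank_eq_of_mem_Nset_prefTag {T0 T' : TreeSpace} {s t : List ℕ}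
    (hT' : T' ∈ Nset β (prefTag T0 s)) (ht : t <+: s) :
    T'.1 t = true ∧ treeRank T' t = treeRank T0 t := by
  have := hT'.2 (t, treeRank T0 t) (mem_prefTag_iff.mpr ⟨ht, rfl⟩)
  exact this

lemma isOpen_beta_basic {p : Tagged} (hp : p ∈ Pfin β) :
    @IsOpen _ (betaTop β) {T : ↥(Rset β) | (T : TreeSpace) ∈ Nset β p} := by
  show IsOpen[TopologicalSpace.generateFrom _] _
  exact TopologicalSpace.isOpen_generateFrom_of_mem ⟨p, hp, rfl⟩

/-- The set of trees containing `s` with given rank is β-open. -/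
lemma isOpen_beta_rank (s : List ℕ) (o : WithTop Ordinal.{0}) :
    @IsOpen _ (betaTop β) {T : ↥(Rset β) |
      (T : TreeSpace).1 s = true ∧ treeRank (T : TreeSpace) s = o} := by
  letI := betaTop β
  have : {T : ↥(Rset β) | (T : TreeSpace).1 s = true ∧ treeRank (T : TreeSpace) s = o} =
      ⋃ (T0 : ↥(Rset β)) (_ : (T0 : TreeSpace).1 s = true ∧ treeRank (T0 : TreeSpace) s = o),
        {T : ↥(Rset β) | (T : TreeSpace) ∈ Nset β (prefTag (T0 : TreeSpace) s)} := by
    refine Set.ext fun T => ?_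
    simp only [Set.mem_setOf_eq, Set.mem_iUnion]
    constructor
    · intro h
      exact ⟨T, h, self_mem_Nset_prefTag T.2 h.1⟩
    · rintro ⟨T0, h0, hN⟩
      obtain ⟨h1, h2⟩ := rank_eq_of_mem_Nset_prefTag hN (List.prefix_refl s)
      exact ⟨h1, by rw [h2, h0.2]⟩
  rw [this]
  exact isOpen_iUnion fun T0 => isOpen_iUnion fun h0 =>
    isOpen_beta_basic (prefTag_mem_Pfin T0.2 h0.1)

lemma exists_flip {T0 : TreeSpace} (h0 : T0.1 [] = true) :
    ∀ {s : List ℕ}, T0.1 s = false →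
      ∃ t n, (t ++ [n]) <+: s ∧ T0.1 t = true ∧ T0.1 (t ++ [n]) = false := by
  intro s
  induction s using List.reverseRecOn with
  | nil => intro h; rw [h0] at h; simp at h
  | append_singleton s' a ih =>
    intro h
    cases hc : T0.1 s' with
    | false =>
      obtain ⟨t, n, h1, h2, h3⟩ := ih hc
      exact ⟨t, n, h1.trans (s'.prefix_append [a]), h2, h3⟩
    | true => exact ⟨s', a, List.prefix_refl _, hc, h⟩

/-- The set of trees not containing `s` is β-open. -/
lemma isOpen_beta_not_mem (s : List ℕ) :
    @IsOpen _ (betaTop β) {T : ↥(Rset β) | (T : TreeSpace).1 s = false} := by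
  letI := betaTop β
  -- for each tree T0 missing s, pick the flip point and use its prefix tag
  have key : ∀ T0 : ↥(Rset β), (T0 : TreeSpace).1 s = false →
      ∃ p ∈ Pfin β, (T0 : TreeSpace) ∈ Nset β p ∧
        ∀ T : ↥(Rset β), (T : TreeSpace) ∈ Nset β p → (T : TreeSpace).1 s = false := by
    intro T0 h0
    obtain ⟨t, n, h1, h2, h3⟩ := exists_flip T0.2.1.1 h0
    refine ⟨prefTag (T0 : TreeSpace) t, prefTag_mem_Pfin T0.2 h2,
      self_mem_Nset_prefTag T0.2 h2, ?_⟩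
    intro T hT
    -- rank of t in T0 is 0 since t has no children in T0
    have hnochild : ∀ m, (T0 : TreeSpace).1 (t ++ [m]) = false := by
      intro m
      rw [T0.2.1.2 t m n]
      exact h3
    have hacc : Acc (childRel (T0 : TreeSpace).1) t := acc_of_no_child hnochild
    have hr0 : treeRank (T0 : TreeSpace) t = ((0 : Ordinal.{0}) : WithTop Ordinal.{0}) := by
      rw [treeRank_of_acc hacc, rank_eq_zero_of_no_child hacc hnochild]
    obtain ⟨htT, hrT⟩ := rank_eq_of_mem_Nset_prefTag hT (List.prefix_refl t)
    rw [hr0] at hrT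
    -- hence t has rank 0 in T, so t has no children in T
    have haccT : Acc (childRel (T : TreeSpace).1) t := by
      by_contra hc
      rw [treeRank_of_not_acc hc] at hrT
      simp at hrT
    have hrankT : haccT.rank = 0 := by
      have := treeRank_of_acc haccT
      rw [hrT] at this
      exact_mod_cast this.symm
    have hnochildT : (T : TreeSpace).1 (t ++ [n]) = false := by
      cases hc : (T : TreeSpace).1 (t ++ [n]) with
      | false => rfl
      | true =>
        have hchd : childRel (T : TreeSpace).1 (t ++ [n]) t := ⟨hc, n, rfl⟩
        have := rank_pos_of_child haccT hchd
        rw [hrankT] at this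
        exact absurd this (lt_irrefl _)
    cases hc : (T : TreeSpace).1 s with
    | false => rfl
    | true =>
      have := (T : TreeSpace).2 s (t ++ [n]) h1 hc
      rw [hnochildT] at this
      simp at this
  classical
  have : {T : ↥(Rset β) | (T : TreeSpace).1 s = false} =
      ⋃ (T0 : ↥(Rset β)) (h : (T0 : TreeSpace).1 s = false),
        {T : ↥(Rset β) | (T : TreeSpace) ∈ Nset β (key T0 h).choose} := by
    refine Set.ext fun T => ?_
    simp only [Set.mem_setOf_eq, Set.mem_iUnion]
    constructor
    · intro h
      exact ⟨T, h, (key T h).choose_spec.2.1⟩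
    · rintro ⟨T0, h0, hN⟩
      exact (key T0 h0).choose_spec.2.2 T hN
  rw [this]
  exact isOpen_iUnion fun T0 => isOpen_iUnion fun h0 =>
    isOpen_beta_basic (key T0 h0).choose_spec.1

end Aux6
section Aux7

variable {β : Ordinal.{0}}

/-- The bijection between `S_β` (as a subspace) and `R_β`. -/
noncomputable def ssetEquiv (β : Ordinal.{0}) :
    ↥(Subtype.val ⁻¹' Sset β : Set ↥(TagTreeSet β)) ≃ ↥(Rset β) where
  toFun x := ⟨ssetTree x.2, ssetTree_mem_Rset x.2⟩
  invFun T := ⟨⟨invF β (T : TreeSpace), (invF_mem_Sset T.2).1⟩, invF_mem_Sset T.2⟩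
  left_inv x := by
    refine Subtype.ext (Subtype.ext ?_)
    show invF β (ssetTree x.2) = ((x : ↥(TagTreeSet β)) : TagFun β)
    refine toTagged_injective ?_
    rw [toTagged_invF (ssetTree_mem_Rset x.2), ← (ssetTree_spec x.2).2]
  right_inv T := by
    refine Subtype.ext ?_
    show ssetTree (invF_mem_Sset T.2) = (T : TreeSpace)
    refine rkGraph_injective ?_
    rw [← (ssetTree_spec (invF_mem_Sset T.2)).2, toTagged_invF T.2]

lemma continuous_ssetEquiv (β : Ordinal.{0}) :
    Continuous[_, betaTop β] (ssetEquiv β) := by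
  show Continuous[_, TopologicalSpace.generateFrom _] _
  rw [continuous_generateFrom_iff]
  rintro U ⟨p, hp, rfl⟩
  have hpre : (ssetEquiv β) ⁻¹' {T : ↥(Rset β) | (T : TreeSpace) ∈ Nset β p} =
      ⋂ z ∈ p, {x : ↥(Subtype.val ⁻¹' Sset β : Set ↥(TagTreeSet β)) |
        z ∈ toTagged ((x : ↥(TagTreeSet β)) : TagFun β)} := by
    refine Set.ext fun x => ?_
    simp only [Set.mem_preimage, Set.mem_setOf_eq, Set.mem_iInter]
    constructor
    · intro h z hz
      rw [(ssetTree_spec x.2).2]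
      exact ⟨(h.2 z hz).1, (h.2 z hz).2⟩
    · intro h
      refine ⟨ssetTree_mem_Rset x.2, fun z hz => ?_⟩
      have := h z hz
      rw [(ssetTree_spec x.2).2] at this
      exact ⟨this.1, this.2⟩
  rw [hpre]
  refine Set.Finite.isOpen_biInter hp.1 fun z hz => ?_
  have hzv : z.2 = ⊤ ∨ z.2 < (β : WithTop Ordinal.{0}) := hp.2.2 z hz
  set w : TagVal β := ⟨z.2, hzv⟩ with hw
  have : {x : ↥(Subtype.val ⁻¹' Sset β : Set ↥(TagTreeSet β)) |
      z ∈ toTagged ((x : ↥(TagTreeSet β)) : TagFun β)} =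
      (fun x : ↥(Subtype.val ⁻¹' Sset β : Set ↥(TagTreeSet β)) =>
        ((x : ↥(TagTreeSet β)) : TagFun β) (z.1, w)) ⁻¹' {true} := by
    refine Set.ext fun x => ?_
    simp only [Set.mem_preimage, Set.mem_setOf_eq, Set.mem_singleton_iff]
    have hz2 : z = (z.1, (w : WithTop Ordinal.{0})) := rfl
    rw [hz2, mem_toTagged_iff]
  rw [this]
  exact (isOpen_discrete _).preimage ((continuous_apply _).comp
    (continuous_subtype_val.comp continuous_subtype_val))

lemma continuous_ssetEquiv_symm (β : Ordinal.{0}) :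
    Continuous[betaTop β, _] (ssetEquiv β).symm := by
  letI := betaTop β
  refine Continuous.subtype_mk (Continuous.subtype_mk ?_ _) _
  show Continuous[betaTop β, _] fun T : ↥(Rset β) => invF β (T : TreeSpace)
  refine continuous_pi fun c => ?_
  rw [continuous_discrete_rng]
  intro b
  cases b with
  | true =>
    have : (fun T : ↥(Rset β) => invF β (T : TreeSpace) c) ⁻¹' {true} =
        {T : ↥(Rset β) | (T : TreeSpace).1 c.1 = true ∧
          treeRank (T : TreeSpace) c.1 = (c.2 : WithTop Ordinal.{0})} := by
      refine Set.ext fun T => ?_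
      simp only [Set.mem_preimage, Set.mem_singleton_iff, Set.mem_setOf_eq]
      exact invF_eq_true_iff
    rw [this]
    exact isOpen_beta_rank c.1 _
  | false =>
    have : (fun T : ↥(Rset β) => invF β (T : TreeSpace) c) ⁻¹' {false} =
        {T : ↥(Rset β) | (T : TreeSpace).1 c.1 = false} ∪
        ⋃ (o : WithTop Ordinal.{0}) (_ : o ≠ (c.2 : WithTop Ordinal.{0})),
          {T : ↥(Rset β) | (T : TreeSpace).1 c.1 = true ∧ treeRank (T : TreeSpace) c.1 = o} := by
      refine Set.ext fun T => ?_
      constructor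
      · intro h
        have h' : invF β (T : TreeSpace) c = false := h
        have hne : ¬ (invF β (T : TreeSpace) c = true) := by rw [h']; simp
        rw [invF_eq_true_iff] at hne
        cases hc : (T : TreeSpace).1 c.1 with
        | false => exact Or.inl hc
        | true =>
          exact Or.inr (Set.mem_iUnion.mpr ⟨treeRank (T : TreeSpace) c.1,
            Set.mem_iUnion.mpr ⟨fun heq => hne ⟨hc, heq⟩, hc, rfl⟩⟩)
      · intro h
        have hne : ¬ (invF β (T : TreeSpace) c = true) := by
          rw [invF_eq_true_iff]
          rintro ⟨h1, h2⟩
          rcases h with h3 | h3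
          · have h3' : (T : TreeSpace).1 c.1 = false := h3
            rw [h1] at h3'
            simp at h3'
          · obtain ⟨o, ho⟩ := Set.mem_iUnion.mp h3
            obtain ⟨hne2, h4, h5⟩ := Set.mem_iUnion.mp ho
            rw [h2] at h5
            exact hne2 h5.symm
        have : invF β (T : TreeSpace) c = false := by
          cases hc : invF β (T : TreeSpace) c with
          | false => rfl
          | true => exact absurd hc hne
        exact this
    rw [this]
    exact (isOpen_beta_not_mem c.1).union
      (isOpen_iUnion fun o => isOpen_iUnion fun _ => isOpen_beta_rank c.1 o)

end Aux7
theorem statement_11 (β : Ordinal.{0}) (hβ : β < ω₁) :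
    IsGδ (Subtype.val ⁻¹' Sset β : Set ↥(TagTreeSet β)) ∧
    ∃ e : @Homeomorph (↥(Subtype.val ⁻¹' Sset β : Set ↥(TagTreeSet β))) (↥(Rset β))
        inferInstance (betaTop β),
      ∀ (x : ↥(Subtype.val ⁻¹' Sset β : Set ↥(TagTreeSet β))) (s : List ℕ),
        ((e x : ↥(Rset β)) : TreeSpace).1 s = true ↔
          s ∈ Tagged.dom (toTagged ((x : ↥(TagTreeSet β)) : TagFun β)) := by
  refine ⟨isGδ_sset hβ,
    ⟨@Homeomorph.mk _ _ inferInstance (betaTop β) (ssetEquiv β)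
      (continuous_ssetEquiv β) (continuous_ssetEquiv_symm β), ?_⟩⟩
  intro x s
  show (ssetTree x.2).1 s = true ↔ _
  rw [show toTagged ((x : ↥(TagTreeSet β)) : TagFun β) = rkGraph (ssetTree x.2) from
    (ssetTree_spec x.2).2]
  exact mem_dom_rkGraph.symm
end

section
/- For each countable ordinal β, the β-topology on R_β is a Polish topology which refines the topology that R_β inherits as a subspace of 𝒯. -/
open Cardinal Ordinal Topology

namespace Statement12

/-! ### treeRank basics -/

theorem treeRank_of_acc {T : TreeSpace} {s : List ℕ} (h : Acc (childRel T.1) s) :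
    treeRank T s = (h.rank : WithTop Ordinal.{0}) := dif_pos h

theorem treeRank_of_not_acc {T : TreeSpace} {s : List ℕ} (h : ¬ Acc (childRel T.1) s) :
    treeRank T s = ⊤ := dif_neg h

theorem acc_of_treeRank_ne_top {T : TreeSpace} {s : List ℕ} (h : treeRank T s ≠ ⊤) :
    Acc (childRel T.1) s := by
  by_contra hn; exact h (treeRank_of_not_acc hn)

theorem treeRank_ne_top_of_acc {T : TreeSpace} {s : List ℕ} (h : Acc (childRel T.1) s) :
    treeRank T s ≠ ⊤ := by
  rw [treeRank_of_acc h]; exact WithTop.coe_ne_top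

theorem treeRank_coe_iff {T : TreeSpace} {s : List ℕ} {γ : Ordinal.{0}} :
    treeRank T s = (γ : WithTop Ordinal.{0}) ↔ ∃ h : Acc (childRel T.1) s, h.rank = γ := by
  constructor
  · intro h
    have hacc : Acc (childRel T.1) s := acc_of_treeRank_ne_top (by rw [h]; exact WithTop.coe_ne_top)
    refine ⟨hacc, ?_⟩
    rw [treeRank_of_acc hacc] at h
    exact_mod_cast h
  · rintro ⟨h, rfl⟩
    exact treeRank_of_acc h

theorem acc_child {T : TreeSpace} {s : List ℕ} (h : Acc (childRel T.1) s) {n : ℕ}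
    (hT : T.1 (s ++ [n]) = true) : Acc (childRel T.1) (s ++ [n]) :=
  h.inv ⟨hT, n, rfl⟩

theorem treeRank_child_lt {T : TreeSpace} {s : List ℕ} (h : Acc (childRel T.1) s) {n : ℕ}
    (hT : T.1 (s ++ [n]) = true) : treeRank T (s ++ [n]) < treeRank T s := by
  rw [treeRank_of_acc h, treeRank_of_acc (acc_child h hT)]
  exact_mod_cast Acc.rank_lt_of_rel h ⟨hT, n, rfl⟩

/-- Along a strict extension inside the tree, ranks strictly decrease. -/
theorem acc_prefix_and_lt {T : TreeSpace} :
    ∀ u : List ℕ, T.1 u = true → ∀ t : List ℕ, Acc (childRel T.1) t → t <+: u → t ≠ u →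
      Acc (childRel T.1) u ∧ treeRank T u < treeRank T t := by
  intro u
  induction u using List.reverseRecOn with
  | nil =>
    intro _ t _ hpre hne
    exact absurd (List.prefix_nil.mp hpre) hne
  | append_singleton us a IH =>
    intro hu t hacc hpre hne
    have hus : T.1 us = true := T.2 _ _ (List.prefix_append _ _) hu
    have hsplit : t = us ∨ (t <+: us ∧ t ≠ us) := by
      rcases eq_or_ne t us with h | h
      · exact Or.inl h
      · refine Or.inr ⟨?_, h⟩
        have hlen : t.length ≤ us.length := by
          have := hpre.length_le
          simp only [List.length_append, List.length_singleton] at this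
          rcases Nat.lt_or_ge t.length (us.length + 1) with h' | h'
          · omega
          · exfalso
            have : t.length = us.length + 1 := le_antisymm (by simpa using hpre.length_le) h'
            exact hne (List.IsPrefix.eq_of_length hpre (by simpa using this))
        exact List.prefix_of_prefix_length_le hpre (List.prefix_append _ _) hlen
    rcases hsplit with rfl | ⟨hpre', hne'⟩
    · exact ⟨acc_child hacc hu, treeRank_child_lt hacc hu⟩
    · obtain ⟨haccus, hlt⟩ := IH hus t hacc hpre' hne'
      exact ⟨acc_child haccus hu, (treeRank_child_lt haccus hu).trans hlt⟩

theorem acc_prefix {T : TreeSpace} {u t : List ℕ} (hu : T.1 u = true)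
    (hacc : Acc (childRel T.1) t) (hpre : t <+: u) : Acc (childRel T.1) u := by
  rcases eq_or_ne t u with rfl | hne
  · exact hacc
  · exact (acc_prefix_and_lt u hu t hacc hpre hne).1

theorem treeRank_eq_zero_of_no_child {T : TreeSpace} {s : List ℕ}
    (hc : ∀ n : ℕ, T.1 (s ++ [n]) = false) :
    treeRank T s = ((0 : Ordinal.{0}) : WithTop Ordinal.{0}) := by
  have hacc : Acc (childRel T.1) s := by
    refine Acc.intro s fun y hy => ?_
    obtain ⟨hmem, n, rfl⟩ := hy
    rw [hc n] at hmem; exact absurd hmem (by simp)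
  rw [treeRank_of_acc hacc]
  congr 1
  rw [Acc.rank_eq]
  have : IsEmpty {b // childRel T.1 b s} := by
    refine ⟨fun b => ?_⟩
    obtain ⟨hmem, n, hn⟩ := b.2
    rw [hn, hc n] at hmem; exact absurd hmem (by simp)
  rw [ciSup_of_empty]
  exact Ordinal.bot_eq_zero

theorem no_child_of_treeRank_eq_zero {T : TreeSpace} {s : List ℕ}
    (h : treeRank T s = ((0 : Ordinal.{0}) : WithTop Ordinal.{0})) (n : ℕ) :
    T.1 (s ++ [n]) = false := by
  by_contra hc
  have hmem : T.1 (s ++ [n]) = true := by simpa using hc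
  obtain ⟨hacc, hrank⟩ := treeRank_coe_iff.mp h
  have := treeRank_child_lt hacc hmem
  rw [h] at this
  rcases WithTop.lt_iff_exists_coe.mp this with ⟨γ, hγ, hlt⟩
  exact not_lt_zero (a := γ) (by exact_mod_cast hlt)

end Statement12

namespace Statement12

/-! ### producing open sets in the β-topology -/

theorem isOpen_betaTop_of {β : Ordinal.{0}} {U : Set ↥(Rset β)}
    (h : ∀ T ∈ U, ∃ p ∈ Pfin β, (T : TreeSpace) ∈ Nset β p ∧
      ∀ T' : ↥(Rset β), (T' : TreeSpace) ∈ Nset β p → T' ∈ U) :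
    IsOpen[betaTop β] U := by
  choose! p hp hmem hsub using h
  have hU : U = ⋃₀ {V | (∃ q ∈ Pfin β, V = {T : ↥(Rset β) | (T : TreeSpace) ∈ Nset β q}) ∧
      V ⊆ U} := by
    ext T
    constructor
    · intro hT
      exact ⟨{T' : ↥(Rset β) | (T' : TreeSpace) ∈ Nset β (p T)},
        ⟨⟨p T, hp T hT, rfl⟩, fun T' hT' => hsub T hT T' hT'⟩, hmem T hT⟩
    · rintro ⟨V, ⟨_, hVU⟩, hTV⟩
      exact hVU hTV
  rw [hU]
  exact TopologicalSpace.GenerateOpen.sUnion _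
    (fun V hV => TopologicalSpace.GenerateOpen.basic V hV.1)

/-- The canonical condition tagging all initial segments of `s` with their ranks. -/
noncomputable def prefixTag (T : TreeSpace) (s : List ℕ) : Tagged :=
  (fun u => (u, treeRank T u)) '' {u | u <+: s}

theorem mem_prefixTag {T : TreeSpace} {s u : List ℕ} {h : WithTop Ordinal.{0}} :
    (u, h) ∈ prefixTag T s ↔ u <+: s ∧ h = treeRank T u := by
  constructor
  · rintro ⟨v, hv, heq⟩
    obtain ⟨rfl, rfl⟩ : v = u ∧ treeRank T v = h := by
      constructor
      · exact congrArg Prod.fst heq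
      · exact congrArg Prod.snd heq
    exact ⟨hv, rfl⟩
  · rintro ⟨h1, rfl⟩
    exact ⟨u, h1, rfl⟩

theorem dom_prefixTag {T : TreeSpace} {s : List ℕ} :
    (prefixTag T s).dom = {u | u <+: s} := by
  ext u
  constructor
  · rintro ⟨⟨v, h⟩, hv, rfl⟩
    exact (mem_prefixTag.mp hv).1
  · intro hu
    exact ⟨(u, treeRank T u), mem_prefixTag.mpr ⟨hu, rfl⟩, rfl⟩

theorem prefixTag_mem_Pfin {β : Ordinal.{0}} {T : TreeSpace} (hT : T ∈ Rset β) {s : List ℕ}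
    (hs : T.1 s = true) : prefixTag T s ∈ Pfin β := by
  have hpref : ∀ u : List ℕ, u <+: s → T.1 u = true := fun u hu => T.2 s u hu hs
  refine ⟨?_, ⟨?_, ?_, ?_⟩, ?_⟩
  · refine Set.Finite.image _ (Set.Finite.subset s.inits.finite_toSet ?_)
    intro u hu
    simpa using List.mem_inits u s |>.mpr hu
  · intro u h h' hh hh'
    rw [mem_prefixTag] at hh hh'
    rw [hh.2, hh'.2]
  · intro u t htu hu
    rw [dom_prefixTag] at *
    exact htu.trans hu
  · intro u h t h' hu ht htu hne
    rw [mem_prefixTag] at hu ht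
    rcases eq_or_ne (treeRank T t) ⊤ with htop | htop
    · left; rw [ht.2, htop]
    · right
      rw [hu.2, ht.2]
      exact (acc_prefix_and_lt u (hpref u hu.1) t (acc_of_treeRank_ne_top htop) htu hne).2
  · rintro ⟨u, h⟩ hx
    rw [mem_prefixTag] at hx
    rw [hx.2]
    exact hT.2 u (hpref u hx.1)

theorem mem_Nset_prefixTag {β : Ordinal.{0}} {T : TreeSpace} (hT : T ∈ Rset β) {s : List ℕ}
    (hs : T.1 s = true) : T ∈ Nset β (prefixTag T s) := by
  refine ⟨hT, ?_⟩
  rintro ⟨u, h⟩ hx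
  rw [mem_prefixTag] at hx
  exact ⟨T.2 s u hx.1 hs, hx.2.symm⟩

theorem of_mem_Nset_prefixTag {β : Ordinal.{0}} {T T' : TreeSpace} {s u : List ℕ}
    (h : T' ∈ Nset β (prefixTag T s)) (hu : u <+: s) :
    T'.1 u = true ∧ treeRank T' u = treeRank T u :=
  h.2 (u, treeRank T u) (mem_prefixTag.mpr ⟨hu, rfl⟩)

theorem betaOpen_mem_and_rank (β : Ordinal.{0}) (s : List ℕ) (h : WithTop Ordinal.{0}) :
    IsOpen[betaTop β] {T : ↥(Rset β) | (T : TreeSpace).1 s = true ∧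
      treeRank (T : TreeSpace) s = h} := by
  refine isOpen_betaTop_of fun T hT => ⟨prefixTag (T : TreeSpace) s,
    prefixTag_mem_Pfin T.2 hT.1, mem_Nset_prefixTag T.2 hT.1, fun T' hT' => ?_⟩
  obtain ⟨hm, hr⟩ := of_mem_Nset_prefixTag hT' (List.prefix_refl s)
  exact ⟨hm, by rw [hr, hT.2]⟩

theorem betaOpen_mem (β : Ordinal.{0}) (s : List ℕ) :
    IsOpen[betaTop β] {T : ↥(Rset β) | (T : TreeSpace).1 s = true} := by
  refine isOpen_betaTop_of fun T hT => ⟨prefixTag (T : TreeSpace) s,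
    prefixTag_mem_Pfin T.2 hT, mem_Nset_prefixTag T.2 hT, fun T' hT' => ?_⟩
  exact (of_mem_Nset_prefixTag hT' (List.prefix_refl s)).1

theorem betaOpen_notMem (β : Ordinal.{0}) (s : List ℕ) :
    IsOpen[betaTop β] {T : ↥(Rset β) | (T : TreeSpace).1 s = false} := by
  refine isOpen_betaTop_of fun T hT => ?_
  have hTfalse : (T : TreeSpace).1 s = false := hT
  set P : ℕ → Prop := fun k => (T : TreeSpace).1 (s.take k) = true with hP
  have hP0 : P 0 := by simpa [P] using T.2.1.1
  set k : ℕ := Nat.findGreatest P s.length with hk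
  set t : List ℕ := s.take k with ht
  have htmem : (T : TreeSpace).1 t = true := Nat.findGreatest_spec (Nat.zero_le _) hP0
  have hk_le : k ≤ s.length := Nat.findGreatest_le _
  have hk_lt : k < s.length := by
    rcases lt_or_eq_of_le hk_le with h | h
    · exact h
    · exfalso
      rw [ht, h, List.take_length] at htmem
      rw [htmem] at hTfalse
      exact absurd hTfalse (by simp)
  have hnot : ¬ P (k + 1) := Nat.findGreatest_is_greatest (Nat.lt_succ_self k) (by omega)
  have htake : s.take (k + 1) = t ++ [s.get ⟨k, hk_lt⟩] := by
    rw [ht, List.take_succ]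
    congr
    rw [List.getElem?_eq_getElem hk_lt]
    rfl
  have hchild0 : (T : TreeSpace).1 (t ++ [s.get ⟨k, hk_lt⟩]) = false := by
    rw [← htake]
    simpa [P] using hnot
  have hallchild : ∀ m : ℕ, (T : TreeSpace).1 (t ++ [m]) = false := fun m =>
    (T.2.1.2 t m _).trans hchild0
  have hrank0 : treeRank (T : TreeSpace) t = ((0 : Ordinal.{0}) : WithTop Ordinal.{0}) :=
    treeRank_eq_zero_of_no_child hallchild
  refine ⟨prefixTag (T : TreeSpace) t, prefixTag_mem_Pfin T.2 htmem,
    mem_Nset_prefixTag T.2 htmem, fun T' hT' => ?_⟩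
  obtain ⟨hm, hr⟩ := of_mem_Nset_prefixTag hT' (List.prefix_refl t)
  rw [hrank0] at hr
  have hnochild := no_child_of_treeRank_eq_zero hr (s.get ⟨k, hk_lt⟩)
  show (T' : TreeSpace).1 s = false
  by_contra hc
  have hstrue : (T' : TreeSpace).1 s = true := by simpa using hc
  have : (T' : TreeSpace).1 (s.take (k + 1)) = true :=
    (T' : TreeSpace).2 s _ (List.take_prefix _ _) hstrue
  rw [htake] at this
  rw [this] at hnochild
  exact absurd hnochild (by simp)

end Statement12

namespace Statement12

theorem betaTop_le_std (β : Ordinal.{0}) :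
    betaTop β ≤ (inferInstance : TopologicalSpace ↥(Rset β)) := by
  have h1 : (inferInstance : TopologicalSpace ↥(Rset β)) =
      TopologicalSpace.induced
        (fun T : ↥(Rset β) => ((T : TreeSpace).1 : List ℕ → Bool)) Pi.topologicalSpace := by
    show TopologicalSpace.induced _ (TopologicalSpace.induced _ _) = _
    rw [induced_compose]
    rfl
  rw [h1]
  have hc : Continuous[betaTop β, Pi.topologicalSpace]
      (fun T : ↥(Rset β) => ((T : TreeSpace).1 : List ℕ → Bool)) := by
    letI := betaTop β
    refine continuous_pi fun s => ?_
    refine continuous_discrete_rng.mpr fun b => ?_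
    cases b
    · exact betaOpen_notMem β s
    · exact betaOpen_mem β s
  exact continuous_iff_le_induced.mp hc

end Statement12

namespace Statement12

/-! ### The coding space -/

/-- Codes for the possible "status" of a node: absent, rank `∞`, or rank an ordinal `< β`. -/
structure Code (β : Ordinal.{0}) : Type 1 where
  val : Option (WithTop Ordinal.{0})
  prop : val = none ∨ val = some ⊤ ∨
    ∃ γ : Ordinal.{0}, γ < β ∧ val = some (γ : WithTop Ordinal.{0})

variable {β : Ordinal.{0}}

theorem Code.ext' {x y : Code β} (h : x.val = y.val) : x = y := by
  cases x; cases y; simp only at h; subst h; rfl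

instance : TopologicalSpace (Code β) := ⊥
instance : DiscreteTopology (Code β) := ⟨rfl⟩

/-- The full coding space: statuses plus witness data. -/
abbrev XS (β : Ordinal.{0}) : Type 1 :=
  (List ℕ → Code β) × ((List ℕ × ↥(Set.Iio β)) → ℕ) × (List ℕ → ℕ)

def isNone (v : Code β) : Prop := v.val = none
def isTop (v : Code β) : Prop := v.val = some ⊤
def good (δ : Ordinal.{0}) (v : Code β) : Prop :=
  ∃ γ : Ordinal.{0}, δ ≤ γ ∧ v.val = some (γ : WithTop Ordinal.{0})
def guard' (δ : Ordinal.{0}) (v : Code β) : Prop :=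
  ∃ γ : Ordinal.{0}, δ < γ ∧ v.val = some (γ : WithTop Ordinal.{0})

/-- The status of a node of a tree in `R_β`. -/
noncomputable def statusCode (β : Ordinal.{0}) (T : ↥(Rset β)) (s : List ℕ) : Code β :=
  ⟨if (T : TreeSpace).1 s = true then some (treeRank (T : TreeSpace) s) else none, by
    by_cases h : (T : TreeSpace).1 s = true
    · rcases T.2.2 s h with h2 | h2
      · right; left; simp [h, h2]
      · right; right
        rcases WithTop.lt_iff_exists_coe.mp h2 with ⟨γ, hγ, hlt⟩
        exact ⟨γ, by exact_mod_cast hlt, by simp [h, hγ]⟩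
    · left; simp [h]⟩

theorem statusCode_val (β : Ordinal.{0}) (T : ↥(Rset β)) (s : List ℕ) :
    (statusCode β T s).val =
      if (T : TreeSpace).1 s = true then some (treeRank (T : TreeSpace) s) else none := rfl

open Classical in
/-- Witness function: the least immediate successor witnessing that the rank of `s` is `> δ`. -/
noncomputable def wOrd (f : List ℕ → Code β) (q : List ℕ × ↥(Set.Iio β)) : ℕ :=
  if guard' q.2.1 (f q.1) then sInf {n : ℕ | good q.2.1 (f (q.1 ++ [n]))} + 1 else 0

open Classical in
/-- Witness function: the least immediate successor witnessing rank `∞`. -/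
noncomputable def wTop (f : List ℕ → Code β) (s : List ℕ) : ℕ :=
  if isTop (f s) then sInf {n : ℕ | isTop (f (s ++ [n]))} + 1 else 0

/-- The coding map. -/
noncomputable def phi (β : Ordinal.{0}) (T : ↥(Rset β)) : XS β :=
  (statusCode β T, wOrd (statusCode β T), wTop (statusCode β T))

/-- The closed set of "locally correct" codes. -/
def Scond (β : Ordinal.{0}) : Set (XS β) :=
  {x | (¬ isNone (x.1 []))
     ∧ (∀ s n, ¬ isNone (x.1 (s ++ [n])) → ¬ isNone (x.1 s))
     ∧ (∀ s n m, isNone (x.1 (s ++ [n])) ↔ isNone (x.1 (s ++ [m])))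
     ∧ (∀ s n (γ : Ordinal.{0}), (x.1 s).val = some (γ : WithTop Ordinal.{0}) →
          ¬ isNone (x.1 (s ++ [n])) →
          ∃ δ : Ordinal.{0}, δ < γ ∧ (x.1 (s ++ [n])).val = some (δ : WithTop Ordinal.{0}))
     ∧ (∀ s, x.2.2 s = 0 ↔ ¬ isTop (x.1 s))
     ∧ (∀ s n, x.2.2 s = n + 1 → isTop (x.1 (s ++ [n])))
     ∧ (∀ s n m, x.2.2 s = n + 1 → m < n → ¬ isTop (x.1 (s ++ [m])))
     ∧ (∀ q : List ℕ × ↥(Set.Iio β), x.2.1 q = 0 ↔ ¬ guard' q.2.1 (x.1 q.1))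
     ∧ (∀ (q : List ℕ × ↥(Set.Iio β)) n, x.2.1 q = n + 1 → good q.2.1 (x.1 (q.1 ++ [n])))
     ∧ (∀ (q : List ℕ × ↥(Set.Iio β)) n m, x.2.1 q = n + 1 → m < n →
          ¬ good q.2.1 (x.1 (q.1 ++ [m])))}

section Closed

theorem continuous_coord1 (i : List ℕ) : Continuous fun x : XS β => x.1 i :=
  (continuous_apply i).comp continuous_fst

theorem continuous_coord2 (q : List ℕ × ↥(Set.Iio β)) : Continuous fun x : XS β => x.2.1 q :=
  (continuous_apply q).comp (continuous_fst.comp continuous_snd)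

theorem continuous_coord3 (s : List ℕ) : Continuous fun x : XS β => x.2.2 s :=
  (continuous_apply s).comp (continuous_snd.comp continuous_snd)

theorem isClosed_P2 {X A B : Type*} [TopologicalSpace X] [TopologicalSpace A]
    [TopologicalSpace B] [DiscreteTopology A] [DiscreteTopology B] {P : A → B → Prop}
    {a : X → A} {b : X → B} (ha : Continuous a) (hb : Continuous b) :
    IsClosed {x | P (a x) (b x)} := by
  have : {x | P (a x) (b x)} = (fun x => (a x, b x)) ⁻¹' {p : A × B | P p.1 p.2} := rfl
  rw [this]
  exact (isClosed_discrete _).preimage (ha.prodMk hb)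

theorem isClosed_P1 {X A : Type*} [TopologicalSpace X] [TopologicalSpace A]
    [DiscreteTopology A] {P : A → Prop} {a : X → A} (ha : Continuous a) :
    IsClosed {x | P (a x)} :=
  (isClosed_discrete _).preimage ha

theorem isClosed_Scond (β : Ordinal.{0}) : IsClosed (Scond β) := by
  have h1 : IsClosed {x : XS β | ¬ isNone (x.1 [])} :=
    isClosed_P1 (P := fun v => ¬ isNone v) (continuous_coord1 [])
  have h2 : IsClosed {x : XS β | ∀ s n, ¬ isNone (x.1 (s ++ [n])) → ¬ isNone (x.1 s)} := by
    have : {x : XS β | ∀ s n, ¬ isNone (x.1 (s ++ [n])) → ¬ isNone (x.1 s)} =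
        ⋂ (s : List ℕ) (n : ℕ), {x : XS β | ¬ isNone (x.1 (s ++ [n])) → ¬ isNone (x.1 s)} := by
      ext x; simp
    rw [this]
    exact isClosed_iInter fun s => isClosed_iInter fun n =>
      isClosed_P2 (P := fun a b => ¬ isNone a → ¬ isNone b) (continuous_coord1 (s ++ [n])) (continuous_coord1 s)
  have h3 : IsClosed {x : XS β | ∀ s n m, isNone (x.1 (s ++ [n])) ↔ isNone (x.1 (s ++ [m]))} := by
    have : {x : XS β | ∀ s n m, isNone (x.1 (s ++ [n])) ↔ isNone (x.1 (s ++ [m]))} =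
        ⋂ (s : List ℕ) (n : ℕ) (m : ℕ),
          {x : XS β | isNone (x.1 (s ++ [n])) ↔ isNone (x.1 (s ++ [m]))} := by
      ext x; simp
    rw [this]
    exact isClosed_iInter fun s => isClosed_iInter fun n => isClosed_iInter fun m =>
      isClosed_P2 (P := fun a b => isNone a ↔ isNone b) (continuous_coord1 (s ++ [n])) (continuous_coord1 (s ++ [m]))
  have h4 : IsClosed {x : XS β | ∀ s n (γ : Ordinal.{0}),
      (x.1 s).val = some (γ : WithTop Ordinal.{0}) → ¬ isNone (x.1 (s ++ [n])) →
      ∃ δ : Ordinal.{0}, δ < γ ∧ (x.1 (s ++ [n])).val = some (δ : WithTop Ordinal.{0})} := by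
    have : {x : XS β | ∀ s n (γ : Ordinal.{0}),
        (x.1 s).val = some (γ : WithTop Ordinal.{0}) → ¬ isNone (x.1 (s ++ [n])) →
        ∃ δ : Ordinal.{0}, δ < γ ∧ (x.1 (s ++ [n])).val = some (δ : WithTop Ordinal.{0})} =
        ⋂ (s : List ℕ) (n : ℕ), {x : XS β | ∀ γ : Ordinal.{0},
          (x.1 s).val = some (γ : WithTop Ordinal.{0}) → ¬ isNone (x.1 (s ++ [n])) →
          ∃ δ : Ordinal.{0}, δ < γ ∧ (x.1 (s ++ [n])).val = some (δ : WithTop Ordinal.{0})} := by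
      ext x; simp only [Set.mem_setOf_eq, Set.mem_iInter]
    rw [this]
    exact isClosed_iInter fun s => isClosed_iInter fun n =>
      isClosed_P2 (P := fun a b => ∀ γ : Ordinal.{0},
          a.val = some (γ : WithTop Ordinal.{0}) → ¬ isNone b →
          ∃ δ : Ordinal.{0}, δ < γ ∧ b.val = some (δ : WithTop Ordinal.{0}))
        (continuous_coord1 s) (continuous_coord1 (s ++ [n]))
  have h5 : IsClosed {x : XS β | ∀ s, x.2.2 s = 0 ↔ ¬ isTop (x.1 s)} := by
    have : {x : XS β | ∀ s, x.2.2 s = 0 ↔ ¬ isTop (x.1 s)} =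
        ⋂ (s : List ℕ), {x : XS β | x.2.2 s = 0 ↔ ¬ isTop (x.1 s)} := by ext x; simp
    rw [this]
    exact isClosed_iInter fun s =>
      isClosed_P2 (P := fun (a : ℕ) b => a = 0 ↔ ¬ isTop b)
        (continuous_coord3 s) (continuous_coord1 s)
  have h6 : IsClosed {x : XS β | ∀ s n, x.2.2 s = n + 1 → isTop (x.1 (s ++ [n]))} := by
    have : {x : XS β | ∀ s n, x.2.2 s = n + 1 → isTop (x.1 (s ++ [n]))} =
        ⋂ (s : List ℕ) (n : ℕ), {x : XS β | x.2.2 s = n + 1 → isTop (x.1 (s ++ [n]))} := by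
      ext x; simp
    rw [this]
    exact isClosed_iInter fun s => isClosed_iInter fun n =>
      isClosed_P2 (P := fun (a : ℕ) b => a = n + 1 → isTop b)
        (continuous_coord3 s) (continuous_coord1 (s ++ [n]))
  have h7 : IsClosed {x : XS β | ∀ s n m, x.2.2 s = n + 1 → m < n → ¬ isTop (x.1 (s ++ [m]))} := by
    have : {x : XS β | ∀ s n m, x.2.2 s = n + 1 → m < n → ¬ isTop (x.1 (s ++ [m]))} =
        ⋂ (s : List ℕ) (n : ℕ) (m : ℕ),
          {x : XS β | x.2.2 s = n + 1 → m < n → ¬ isTop (x.1 (s ++ [m]))} := by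
      ext x; simp only [Set.mem_setOf_eq, Set.mem_iInter]
    rw [this]
    exact isClosed_iInter fun s => isClosed_iInter fun n => isClosed_iInter fun m =>
      isClosed_P2 (P := fun (a : ℕ) b => a = n + 1 → m < n → ¬ isTop b)
        (continuous_coord3 s) (continuous_coord1 (s ++ [m]))
  have h8 : IsClosed {x : XS β | ∀ q : List ℕ × ↥(Set.Iio β),
      x.2.1 q = 0 ↔ ¬ guard' q.2.1 (x.1 q.1)} := by
    have : {x : XS β | ∀ q : List ℕ × ↥(Set.Iio β), x.2.1 q = 0 ↔ ¬ guard' q.2.1 (x.1 q.1)} =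
        ⋂ (q : List ℕ × ↥(Set.Iio β)), {x : XS β | x.2.1 q = 0 ↔ ¬ guard' q.2.1 (x.1 q.1)} := by
      ext x; simp
    rw [this]
    exact isClosed_iInter fun q =>
      isClosed_P2 (P := fun (a : ℕ) b => a = 0 ↔ ¬ guard' q.2.1 b)
        (continuous_coord2 q) (continuous_coord1 q.1)
  have h9 : IsClosed {x : XS β | ∀ (q : List ℕ × ↥(Set.Iio β)) n,
      x.2.1 q = n + 1 → good q.2.1 (x.1 (q.1 ++ [n]))} := by
    have : {x : XS β | ∀ (q : List ℕ × ↥(Set.Iio β)) n,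
        x.2.1 q = n + 1 → good q.2.1 (x.1 (q.1 ++ [n]))} =
        ⋂ (q : List ℕ × ↥(Set.Iio β)) (n : ℕ),
          {x : XS β | x.2.1 q = n + 1 → good q.2.1 (x.1 (q.1 ++ [n]))} := by
      ext x; simp
    rw [this]
    exact isClosed_iInter fun q => isClosed_iInter fun n =>
      isClosed_P2 (P := fun (a : ℕ) b => a = n + 1 → good q.2.1 b)
        (continuous_coord2 q) (continuous_coord1 (q.1 ++ [n]))
  have h10 : IsClosed {x : XS β | ∀ (q : List ℕ × ↥(Set.Iio β)) n m,
      x.2.1 q = n + 1 → m < n → ¬ good q.2.1 (x.1 (q.1 ++ [m]))} := by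
    have : {x : XS β | ∀ (q : List ℕ × ↥(Set.Iio β)) n m,
        x.2.1 q = n + 1 → m < n → ¬ good q.2.1 (x.1 (q.1 ++ [m]))} =
        ⋂ (q : List ℕ × ↥(Set.Iio β)) (n : ℕ) (m : ℕ),
          {x : XS β | x.2.1 q = n + 1 → m < n → ¬ good q.2.1 (x.1 (q.1 ++ [m]))} := by
      ext x; simp only [Set.mem_setOf_eq, Set.mem_iInter]
    rw [this]
    exact isClosed_iInter fun q => isClosed_iInter fun n => isClosed_iInter fun m =>
      isClosed_P2 (P := fun (a : ℕ) b => a = n + 1 → m < n → ¬ good q.2.1 b)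
        (continuous_coord2 q) (continuous_coord1 (q.1 ++ [m]))
  have : Scond β = _ ∩ (_ ∩ (_ ∩ (_ ∩ (_ ∩ (_ ∩ (_ ∩ (_ ∩ (_ ∩ _)))))))) :=
    rfl
  rw [this]
  exact h1.inter (h2.inter (h3.inter (h4.inter (h5.inter (h6.inter (h7.inter
    (h8.inter (h9.inter h10))))))))

end Closed

end Statement12

namespace Statement12

variable {β : Ordinal.{0}}

/-! ### Properties of the coding map -/

theorem isNone_statusCode_iff {T : ↥(Rset β)} {s : List ℕ} :
    isNone (statusCode β T s) ↔ (T : TreeSpace).1 s = false := by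
  cases hb : (T : TreeSpace).1 s with
  | true => simp [isNone, statusCode_val, hb]
  | false => simp [isNone, statusCode_val, hb]

theorem statusCode_val_eq_some_iff {T : ↥(Rset β)} {s : List ℕ} {h : WithTop Ordinal.{0}} :
    (statusCode β T s).val = some h ↔
      (T : TreeSpace).1 s = true ∧ treeRank (T : TreeSpace) s = h := by
  rw [statusCode_val]
  by_cases hb : (T : TreeSpace).1 s = true <;> simp [hb]

theorem isTop_statusCode_iff {T : ↥(Rset β)} {s : List ℕ} :
    isTop (statusCode β T s) ↔
      (T : TreeSpace).1 s = true ∧ treeRank (T : TreeSpace) s = ⊤ :=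
  statusCode_val_eq_some_iff

theorem guard'_statusCode_iff {T : ↥(Rset β)} {s : List ℕ} {δ : Ordinal.{0}} :
    guard' δ (statusCode β T s) ↔ ∃ γ : Ordinal.{0}, δ < γ ∧
      (T : TreeSpace).1 s = true ∧ treeRank (T : TreeSpace) s = (γ : WithTop Ordinal.{0}) := by
  unfold guard'
  constructor
  · rintro ⟨γ, h1, h2⟩
    rw [statusCode_val_eq_some_iff] at h2
    exact ⟨γ, h1, h2⟩
  · rintro ⟨γ, h1, h2⟩
    exact ⟨γ, h1, statusCode_val_eq_some_iff.mpr h2⟩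

theorem good_statusCode_iff {T : ↥(Rset β)} {s : List ℕ} {δ : Ordinal.{0}} :
    good δ (statusCode β T s) ↔ ∃ γ : Ordinal.{0}, δ ≤ γ ∧
      (T : TreeSpace).1 s = true ∧ treeRank (T : TreeSpace) s = (γ : WithTop Ordinal.{0}) := by
  unfold good
  constructor
  · rintro ⟨γ, h1, h2⟩
    rw [statusCode_val_eq_some_iff] at h2
    exact ⟨γ, h1, h2⟩
  · rintro ⟨γ, h1, h2⟩
    exact ⟨γ, h1, statusCode_val_eq_some_iff.mpr h2⟩

theorem not_acc_of_treeRank_eq_top {T : TreeSpace} {s : List ℕ}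
    (h : treeRank T s = ⊤) : ¬ Acc (childRel T.1) s := fun hacc =>
  treeRank_ne_top_of_acc hacc h

/-- If the rank of `s` is `∞` then some immediate successor has rank `∞`. -/
theorem exists_top_child {T : TreeSpace} {s : List ℕ} (h : treeRank T s = ⊤) :
    ∃ n : ℕ, T.1 (s ++ [n]) = true ∧ treeRank T (s ++ [n]) = ⊤ := by
  have hnacc := not_acc_of_treeRank_eq_top h
  by_contra hc
  push_neg at hc
  refine hnacc (Acc.intro s fun y hy => ?_)
  obtain ⟨hmem, n, rfl⟩ := hy
  rcases eq_or_ne (treeRank T (s ++ [n])) ⊤ with htop | htop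
  · exact absurd htop (hc n hmem)
  · exact acc_of_treeRank_ne_top htop

/-- If the rank of `s` is `γ > δ` then some immediate successor has rank in `[δ, γ)`. -/
theorem exists_good_child {T : TreeSpace} {s : List ℕ} {γ δ : Ordinal.{0}}
    (h : treeRank T s = (γ : WithTop Ordinal.{0})) (hδ : δ < γ) :
    ∃ n : ℕ, T.1 (s ++ [n]) = true ∧
      ∃ δ' : Ordinal.{0}, δ ≤ δ' ∧ treeRank T (s ++ [n]) = (δ' : WithTop Ordinal.{0}) := by
  obtain ⟨hacc, hrank⟩ := treeRank_coe_iff.mp h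
  rw [hacc.rank_eq] at hrank
  rw [← hrank] at hδ
  rw [Ordinal.lt_iSup_iff] at hδ
  obtain ⟨⟨y, hy⟩, hlt⟩ := hδ
  rw [Order.lt_succ_iff] at hlt
  obtain ⟨hmem, n, rfl⟩ := hy
  exact ⟨n, hmem, (hacc.inv ⟨hmem, n, rfl⟩).rank, hlt,
    treeRank_of_acc (hacc.inv ⟨hmem, n, rfl⟩)⟩

theorem phi_mem_Scond (T : ↥(Rset β)) : phi β T ∈ Scond β := by
  simp only [phi, Scond, Set.mem_setOf_eq]
  refine ⟨?_, ?_, ?_, ?_, ?_, ?_, ?_, ?_, ?_, ?_⟩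
  · rw [isNone_statusCode_iff]
    intro h; rw [T.2.1.1] at h; exact absurd h (by simp)
  · intro s n h1 h2
    rw [isNone_statusCode_iff] at h1 h2
    have hcm : (T : TreeSpace).1 (s ++ [n]) = true := by
      cases hb : (T : TreeSpace).1 (s ++ [n]) with
      | true => rfl
      | false => exact absurd hb h1
    have := (T : TreeSpace).2 (s ++ [n]) s (List.prefix_append _ _) hcm
    rw [this] at h2
    exact absurd h2 (by simp)
  · intro s n m
    rw [isNone_statusCode_iff, isNone_statusCode_iff, T.2.1.2 s n m]
  · intro s n γ hs hc
    rw [statusCode_val_eq_some_iff] at hs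
    rw [isNone_statusCode_iff] at hc
    have hcm : (T : TreeSpace).1 (s ++ [n]) = true := by
      cases hb : (T : TreeSpace).1 (s ++ [n]) with
      | true => rfl
      | false => exact absurd hb hc
    obtain ⟨hacc, hrank⟩ := treeRank_coe_iff.mp hs.2
    have haccc := acc_child hacc hcm
    refine ⟨haccc.rank, ?_, statusCode_val_eq_some_iff.mpr ⟨hcm, treeRank_of_acc haccc⟩⟩
    have := treeRank_child_lt hacc hcm
    rw [treeRank_of_acc hacc, treeRank_of_acc haccc, hrank] at this
    exact_mod_cast this
  · intro s
    unfold wTop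
    by_cases h : isTop (statusCode β T s) <;> simp [h]
  · intro s n hw
    unfold wTop at hw
    by_cases h : isTop (statusCode β T s)
    · rw [if_pos h] at hw
      have hn : n = sInf {n : ℕ | isTop (statusCode β T (s ++ [n]))} := by omega
      rw [isTop_statusCode_iff] at h
      obtain ⟨m, hm1, hm2⟩ := exists_top_child h.2
      have hne : {n : ℕ | isTop (statusCode β T (s ++ [n]))}.Nonempty :=
        ⟨m, isTop_statusCode_iff.mpr ⟨hm1, hm2⟩⟩
      rw [hn]
      exact Nat.sInf_mem hne
    · rw [if_neg h] at hw; omega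
  · intro s n m hw hm
    unfold wTop at hw
    by_cases h : isTop (statusCode β T s)
    · rw [if_pos h] at hw
      have hn : m < sInf {n : ℕ | isTop (statusCode β T (s ++ [n]))} := by omega
      exact Nat.notMem_of_lt_sInf hn
    · rw [if_neg h] at hw; omega
  · intro q
    unfold wOrd
    by_cases h : guard' q.2.1 (statusCode β T q.1) <;> simp [h]
  · intro q n hw
    unfold wOrd at hw
    by_cases h : guard' q.2.1 (statusCode β T q.1)
    · rw [if_pos h] at hw
      have hn : n = sInf {n : ℕ | good q.2.1 (statusCode β T (q.1 ++ [n]))} := by omega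
      rw [guard'_statusCode_iff] at h
      obtain ⟨γ, hγ, hmem, hrank⟩ := h
      obtain ⟨m, hm1, δ', hδ', hm2⟩ := exists_good_child hrank hγ
      have hne : {n : ℕ | good q.2.1 (statusCode β T (q.1 ++ [n]))}.Nonempty :=
        ⟨m, good_statusCode_iff.mpr ⟨δ', hδ', hm1, hm2⟩⟩
      rw [hn]
      exact Nat.sInf_mem hne
    · rw [if_neg h] at hw; omega
  · intro q n m hw hm
    unfold wOrd at hw
    by_cases h : guard' q.2.1 (statusCode β T q.1)
    · rw [if_pos h] at hw
      have hn : m < sInf {n : ℕ | good q.2.1 (statusCode β T (q.1 ++ [n]))} := by omega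
      exact Nat.notMem_of_lt_sInf hn
    · rw [if_neg h] at hw; omega

theorem phi_injective : Function.Injective (phi β) := by
  intro T T' h
  have hs : ∀ s, statusCode β T s = statusCode β T' s := fun s =>
    congrFun (congrArg Prod.fst h) s
  have : ∀ s, (T : TreeSpace).1 s = (T' : TreeSpace).1 s := by
    intro s
    have := congrArg Code.val (hs s)
    rw [statusCode_val, statusCode_val] at this
    by_cases h1 : (T : TreeSpace).1 s = true <;> by_cases h2 : (T' : TreeSpace).1 s = true
    · rw [h1, h2]
    · rw [if_pos h1, if_neg h2] at this; simp at this
    · rw [if_neg h1, if_pos h2] at this; simp at this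
    · rw [Bool.not_eq_true] at h1 h2; rw [h1, h2]
  exact Subtype.ext (Subtype.ext (funext this))

end Statement12

namespace Statement12

variable {β : Ordinal.{0}}

/-! ### From codes back to trees -/

theorem prefix_concat_cases {t us : List ℕ} {a : ℕ} (h : t <+: us ++ [a]) :
    t = us ++ [a] ∨ t <+: us := by
  rcases eq_or_ne t (us ++ [a]) with h' | h'
  · exact Or.inl h'
  · right
    have hlen : t.length ≤ us.length := by
      have h1 := h.length_le
      simp only [List.length_append, List.length_singleton] at h1
      rcases Nat.lt_or_ge t.length (us.length + 1) with h2 | h2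
      · omega
      · exact absurd (List.IsPrefix.eq_of_length h (by simp; omega)) h'
    exact List.prefix_of_prefix_length_le h (List.prefix_append _ _) hlen

theorem not_isNone_of_isTop {v : Code β} (h : isTop v) : ¬ isNone v := by
  unfold isTop at h; unfold isNone; rw [h]; simp

theorem not_isNone_of_val_some {v : Code β} {h' : WithTop Ordinal.{0}} (h : v.val = some h') :
    ¬ isNone v := by
  unfold isNone; rw [h]; simp

theorem lt_beta_of_val_coe {v : Code β} {γ : Ordinal.{0}}
    (h : v.val = some (γ : WithTop Ordinal.{0})) : γ < β := by
  rcases v.prop with h1 | h1 | ⟨γ', h1, h2⟩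
  · rw [h1] at h; exact absurd h (by simp)
  · rw [h1] at h
    have := Option.some.inj h
    exact absurd this.symm WithTop.coe_ne_top
  · rw [h2] at h
    have := Option.some.inj h
    have : γ' = γ := WithTop.coe_injective this
    exact this ▸ h1

/-- The tree determined by a code. -/
def treeOf (x : XS β) : List ℕ → Bool := fun s => ((x.1 s).val).isSome

theorem treeOf_true_iff {x : XS β} {s : List ℕ} : treeOf x s = true ↔ ¬ isNone (x.1 s) := by
  unfold treeOf isNone
  exact Option.isSome_iff_ne_none

theorem treeOf_false_iff {x : XS β} {s : List ℕ} : treeOf x s = false ↔ isNone (x.1 s) := by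
  rw [← Bool.not_eq_true, treeOf_true_iff, not_not]

theorem isTree_treeOf {x : XS β} (hx : x ∈ Scond β) : IsTreeFun (treeOf x) := by
  have hstep : ∀ s n, treeOf x (s ++ [n]) = true → treeOf x s = true := by
    intro s n h
    exact treeOf_true_iff.mpr (hx.2.1 s n (treeOf_true_iff.mp h))
  intro s
  induction s using List.reverseRecOn with
  | nil =>
    intro t hpre hs
    rw [List.prefix_nil.mp hpre]
    exact hs
  | append_singleton us a IH =>
    intro t hpre hs
    rcases prefix_concat_cases hpre with rfl | hpre'
    · exact hs
    · exact IH t hpre' (hstep us a hs)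

theorem not_isTop_of_acc {x : XS β} (hx : x ∈ Scond β) :
    ∀ y : List ℕ, Acc (childRel (treeOf x)) y → ¬ isTop (x.1 y) := by
  have hchild : ∀ u, isTop (x.1 u) → ∃ n, isTop (x.1 (u ++ [n])) := by
    intro u hu
    rcases hw : x.2.2 u with _ | n
    · exact absurd hu ((hx.2.2.2.2.1 u).mp hw)
    · exact ⟨n, hx.2.2.2.2.2.1 u n hw⟩
  intro y hacc
  induction hacc with
  | intro y h IH =>
    intro htop
    obtain ⟨n, hn⟩ := hchild y htop
    have hmem : treeOf x (y ++ [n]) = true := treeOf_true_iff.mpr (not_isNone_of_isTop hn)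
    exact IH (y ++ [n]) ⟨hmem, n, rfl⟩ hn

theorem rank_eq_of_code {x : XS β} (hx : x ∈ Scond β) :
    ∀ γ : Ordinal.{0}, ∀ s : List ℕ, (x.1 s).val = some (γ : WithTop Ordinal.{0}) →
      ∃ h : Acc (childRel (treeOf x)) s, h.rank = γ := by
  intro γ
  induction γ using Ordinal.induction with
  | h γ IH =>
    intro s hs
    have hchild : ∀ n, treeOf x (s ++ [n]) = true →
        ∃ δ : Ordinal.{0}, δ < γ ∧ (x.1 (s ++ [n])).val = some (δ : WithTop Ordinal.{0}) := by
      intro n hn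
      exact hx.2.2.2.1 s n γ hs (treeOf_true_iff.mp hn)
    have hacc : Acc (childRel (treeOf x)) s := by
      refine Acc.intro s fun y hy => ?_
      obtain ⟨hmem, n, rfl⟩ := hy
      obtain ⟨δ, hδγ, hδ⟩ := hchild n hmem
      exact (IH δ hδγ _ hδ).choose
    refine ⟨hacc, ?_⟩
    apply le_antisymm
    · rw [hacc.rank_eq]
      apply Ordinal.iSup_le
      rintro ⟨y, hy⟩
      obtain ⟨hmem, n, rfl⟩ := hy
      obtain ⟨δ, hδγ, hδ⟩ := hchild n hmem
      obtain ⟨h', hr'⟩ := IH δ hδγ _ hδ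
      have hrr : (hacc.inv (⟨hmem, n, rfl⟩ :
          childRel (treeOf x) (s ++ [n]) s)).rank = δ := hr'
      exact Order.succ_le_iff.mpr (lt_of_eq_of_lt hrr hδγ)
    · by_contra hlt
      push_neg at hlt
      have hγβ : γ < β := lt_beta_of_val_coe hs
      have hρβ : hacc.rank < β := lt_trans hlt hγβ
      set q : List ℕ × ↥(Set.Iio β) := (s, ⟨hacc.rank, hρβ⟩) with hq
      have hguard : guard' hacc.rank (x.1 s) := ⟨γ, hlt, hs⟩
      rcases hw : x.2.1 q with _ | n
      · exact absurd hguard ((hx.2.2.2.2.2.2.2.1 q).mp hw)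
      · obtain ⟨δ', hδ'ρ, hval⟩ := hx.2.2.2.2.2.2.2.2.1 q n hw
        have hmem : treeOf x (s ++ [n]) = true :=
          treeOf_true_iff.mpr (not_isNone_of_val_some hval)
        obtain ⟨δ, hδγ, hδ⟩ := hchild n hmem
        have hδδ' : δ = δ' := WithTop.coe_injective (Option.some.inj (hδ ▸ hval))
        obtain ⟨h', hr'⟩ := IH δ hδγ _ hδ
        have hlt2 : (hacc.inv (⟨hmem, n, rfl⟩ :
            childRel (treeOf x) (s ++ [n]) s)).rank < hacc.rank :=
          Acc.rank_lt_of_rel hacc ⟨hmem, n, rfl⟩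
        have hrr : (hacc.inv (⟨hmem, n, rfl⟩ :
            childRel (treeOf x) (s ++ [n]) s)).rank = δ := hr'
        rw [hrr, hδδ'] at hlt2
        exact absurd hδ'ρ (not_le_of_gt hlt2)

theorem treeOf_mem_Rset {x : XS β} (hx : x ∈ Scond β) :
    (⟨treeOf x, isTree_treeOf hx⟩ : TreeSpace) ∈ Rset β := by
  refine ⟨⟨?_, ?_⟩, ?_⟩
  · exact treeOf_true_iff.mpr hx.1
  · intro s n m
    have := hx.2.2.1 s n m
    show treeOf x (s ++ [n]) = treeOf x (s ++ [m])
    cases hb : treeOf x (s ++ [n]) with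
    | true =>
      symm
      exact treeOf_true_iff.mpr fun hnone =>
        (treeOf_true_iff.mp hb) (this.mpr hnone)
    | false =>
      symm
      exact treeOf_false_iff.mpr (this.mp (treeOf_false_iff.mp hb))
  · intro s hs
    obtain ⟨h, hh⟩ := Option.isSome_iff_exists.mp hs
    rcases (x.1 s).prop with h1 | h1 | ⟨γ, h1, h2⟩
    · exact absurd h1 (not_isNone_of_val_some hh)
    · left
      have hnacc : ¬ Acc (childRel (treeOf x)) s := fun hacc => not_isTop_of_acc hx s hacc h1
      exact treeRank_of_not_acc hnacc
    · right
      obtain ⟨hacc, hrank⟩ := rank_eq_of_code hx γ s h2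
      have : treeRank (⟨treeOf x, isTree_treeOf hx⟩ : TreeSpace) s =
          ((γ : Ordinal.{0}) : WithTop Ordinal.{0}) := by
        rw [treeRank_of_acc hacc, hrank]
      rw [this]
      exact_mod_cast h1

end Statement12

namespace Statement12

variable {β : Ordinal.{0}}

theorem phi_treeOf {x : XS β} (hx : x ∈ Scond β) :
    phi β ⟨⟨treeOf x, isTree_treeOf hx⟩, treeOf_mem_Rset hx⟩ = x := by
  set T : ↥(Rset β) := ⟨⟨treeOf x, isTree_treeOf hx⟩, treeOf_mem_Rset hx⟩ with hT
  have hstatus : statusCode β T = x.1 := by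
    funext s
    apply Code.ext'
    rw [statusCode_val]
    by_cases hb : treeOf x s = true
    · rw [if_pos hb]
      obtain ⟨h, hh⟩ := Option.isSome_iff_exists.mp hb
      rw [hh]
      congr 1
      rcases (x.1 s).prop with h1 | h1 | ⟨γ, h1, h2⟩
      · exact absurd h1 (not_isNone_of_val_some hh)
      · rw [h1] at hh
        have hh' : h = ⊤ := (Option.some.inj hh).symm
        subst hh'
        have hnacc : ¬ Acc (childRel (treeOf x)) s := fun hacc =>
          not_isTop_of_acc hx s hacc h1
        exact treeRank_of_not_acc hnacc
      · rw [h2] at hh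
        have hh' : h = (γ : WithTop Ordinal.{0}) := (Option.some.inj hh).symm
        subst hh'
        obtain ⟨hacc, hrank⟩ := rank_eq_of_code hx γ s h2
        rw [treeRank_of_acc hacc, hrank]
    · rw [if_neg hb]
      symm
      exact treeOf_false_iff.mp (Bool.not_eq_true _ ▸ hb)
  refine Prod.ext hstatus (Prod.ext ?_ ?_)
  · show wOrd (statusCode β T) = x.2.1
    rw [hstatus]
    funext q
    unfold wOrd
    by_cases hg : guard' q.2.1 (x.1 q.1)
    · rw [if_pos hg]
      rcases hw : x.2.1 q with _ | n
      · exact absurd hg ((hx.2.2.2.2.2.2.2.1 q).mp hw)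
      · have hmem : n ∈ {m : ℕ | good q.2.1 (x.1 (q.1 ++ [m]))} :=
          hx.2.2.2.2.2.2.2.2.1 q n hw
        have hleast : ∀ m < n, m ∉ {m : ℕ | good q.2.1 (x.1 (q.1 ++ [m]))} := fun m hm =>
          hx.2.2.2.2.2.2.2.2.2 q n m hw hm
        have : sInf {m : ℕ | good q.2.1 (x.1 (q.1 ++ [m]))} = n := by
          apply le_antisymm (Nat.sInf_le hmem)
          by_contra hc
          push_neg at hc
          exact hleast _ hc (Nat.sInf_mem ⟨n, hmem⟩)
        omega
    · rw [if_neg hg]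
      symm
      exact (hx.2.2.2.2.2.2.2.1 q).mpr hg
  · show wTop (statusCode β T) = x.2.2
    rw [hstatus]
    funext s
    unfold wTop
    by_cases hg : isTop (x.1 s)
    · rw [if_pos hg]
      rcases hw : x.2.2 s with _ | n
      · exact absurd hg ((hx.2.2.2.2.1 s).mp hw)
      · have hmem : n ∈ {m : ℕ | isTop (x.1 (s ++ [m]))} :=
          hx.2.2.2.2.2.1 s n hw
        have hleast : ∀ m < n, m ∉ {m : ℕ | isTop (x.1 (s ++ [m]))} := fun m hm =>
          hx.2.2.2.2.2.2.1 s n m hw hm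
        have : sInf {m : ℕ | isTop (x.1 (s ++ [m]))} = n := by
          apply le_antisymm (Nat.sInf_le hmem)
          by_contra hc
          push_neg at hc
          exact hleast _ hc (Nat.sInf_mem ⟨n, hmem⟩)
        omega
    · rw [if_neg hg]
      symm
      exact (hx.2.2.2.2.1 s).mpr hg

theorem range_phi (β : Ordinal.{0}) : Set.range (phi β) = Scond β := by
  apply Set.eq_of_subset_of_subset
  · rintro _ ⟨T, rfl⟩
    exact phi_mem_Scond T
  · intro x hx
    exact ⟨_, phi_treeOf hx⟩

end Statement12

namespace Statement12

variable {β : Ordinal.{0}}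

/-! ### The β-topology coincides with the topology induced by the coding map -/

theorem betaOpen_statusEq (β : Ordinal.{0}) (s : List ℕ) (d : Code β) :
    IsOpen[betaTop β] {T : ↥(Rset β) | statusCode β T s = d} := by
  rcases hd : d.val with _ | h
  · have heq : {T : ↥(Rset β) | statusCode β T s = d} =
        {T : ↥(Rset β) | (T : TreeSpace).1 s = false} := by
      ext T
      constructor
      · intro hT
        show (T : TreeSpace).1 s = false
        rw [← isNone_statusCode_iff]
        show (statusCode β T s).val = none
        rw [hT]; exact hd
      · intro hT
        apply Code.ext'
        rw [hd]
        exact isNone_statusCode_iff.mpr hT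
    rw [heq]
    exact betaOpen_notMem β s
  · have heq : {T : ↥(Rset β) | statusCode β T s = d} =
        {T : ↥(Rset β) | (T : TreeSpace).1 s = true ∧ treeRank (T : TreeSpace) s = h} := by
      ext T
      constructor
      · intro hT
        apply statusCode_val_eq_some_iff.mp
        rw [hT]; exact hd
      · intro hT
        apply Code.ext'
        rw [hd]
        exact statusCode_val_eq_some_iff.mpr hT
    rw [heq]
    exact betaOpen_mem_and_rank β s h

theorem betaOpen_statusIn (β : Ordinal.{0}) (s : List ℕ) (A : Set (Code β)) :
    IsOpen[betaTop β] {T : ↥(Rset β) | statusCode β T s ∈ A} := by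
  letI := betaTop β
  have heq : {T : ↥(Rset β) | statusCode β T s ∈ A} =
      ⋃ d : A, {T : ↥(Rset β) | statusCode β T s = (d : Code β)} := by
    ext T
    rw [Set.mem_iUnion]
    constructor
    · intro hT
      exact ⟨⟨statusCode β T s, hT⟩, rfl⟩
    · rintro ⟨⟨d, hd⟩, h⟩
      rw [Set.mem_setOf_eq] at h
      rw [Set.mem_setOf_eq, h]
      exact hd
  rw [heq]
  exact isOpen_iUnion fun d => betaOpen_statusEq β s d

theorem wOrd_statusCode_eq_zero_iff {T : ↥(Rset β)} {q : List ℕ × ↥(Set.Iio β)} :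
    wOrd (statusCode β T) q = 0 ↔ ¬ guard' q.2.1 (statusCode β T q.1) := by
  unfold wOrd
  by_cases h : guard' q.2.1 (statusCode β T q.1) <;> simp [h]

theorem wOrd_statusCode_eq_succ_iff {T : ↥(Rset β)} {q : List ℕ × ↥(Set.Iio β)} {n : ℕ} :
    wOrd (statusCode β T) q = n + 1 ↔
      guard' q.2.1 (statusCode β T q.1) ∧ good q.2.1 (statusCode β T (q.1 ++ [n])) ∧
        ∀ m < n, ¬ good q.2.1 (statusCode β T (q.1 ++ [m])) := by
  unfold wOrd
  by_cases h : guard' q.2.1 (statusCode β T q.1)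
  · rw [if_pos h]
    have hne : {m : ℕ | good q.2.1 (statusCode β T (q.1 ++ [m]))}.Nonempty := by
      obtain ⟨γ, hγ, hmem, hrank⟩ := guard'_statusCode_iff.mp h
      obtain ⟨m, hm1, δ', hδ', hm2⟩ := exists_good_child hrank hγ
      exact ⟨m, good_statusCode_iff.mpr ⟨δ', hδ', hm1, hm2⟩⟩
    constructor
    · intro hw
      have hn : sInf {m : ℕ | good q.2.1 (statusCode β T (q.1 ++ [m]))} = n := by omega
      refine ⟨h, ?_, fun m hm => Nat.notMem_of_lt_sInf (s := {m : ℕ | good q.2.1 (statusCode β T (q.1 ++ [m]))}) (by omega)⟩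
      have hmem := Nat.sInf_mem hne
      rw [hn] at hmem
      exact hmem
    · rintro ⟨-, hgood, hleast⟩
      have : sInf {m : ℕ | good q.2.1 (statusCode β T (q.1 ++ [m]))} = n := by
        apply le_antisymm (Nat.sInf_le hgood)
        by_contra hc
        push_neg at hc
        exact hleast _ hc (Nat.sInf_mem (⟨n, hgood⟩ :
          Set.Nonempty {m : ℕ | good q.2.1 (statusCode β T (q.1 ++ [m]))}))
      omega
  · rw [if_neg h]
    constructor
    · omega
    · rintro ⟨hg, -⟩
      exact absurd hg h

theorem wTop_statusCode_eq_zero_iff {T : ↥(Rset β)} {s : List ℕ} :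
    wTop (statusCode β T) s = 0 ↔ ¬ isTop (statusCode β T s) := by
  unfold wTop
  by_cases h : isTop (statusCode β T s) <;> simp [h]

theorem wTop_statusCode_eq_succ_iff {T : ↥(Rset β)} {s : List ℕ} {n : ℕ} :
    wTop (statusCode β T) s = n + 1 ↔
      isTop (statusCode β T s) ∧ isTop (statusCode β T (s ++ [n])) ∧
        ∀ m < n, ¬ isTop (statusCode β T (s ++ [m])) := by
  unfold wTop
  by_cases h : isTop (statusCode β T s)
  · rw [if_pos h]
    have hne : {m : ℕ | isTop (statusCode β T (s ++ [m]))}.Nonempty := by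
      obtain ⟨hmem, hrank⟩ := isTop_statusCode_iff.mp h
      obtain ⟨m, hm1, hm2⟩ := exists_top_child hrank
      exact ⟨m, isTop_statusCode_iff.mpr ⟨hm1, hm2⟩⟩
    constructor
    · intro hw
      have hn : sInf {m : ℕ | isTop (statusCode β T (s ++ [m]))} = n := by omega
      refine ⟨h, ?_, fun m hm => Nat.notMem_of_lt_sInf (s := {m : ℕ | isTop (statusCode β T (s ++ [m]))}) (by omega)⟩
      have hmem := Nat.sInf_mem hne
      rw [hn] at hmem
      exact hmem
    · rintro ⟨-, hgood, hleast⟩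
      have : sInf {m : ℕ | isTop (statusCode β T (s ++ [m]))} = n := by
        apply le_antisymm (Nat.sInf_le hgood)
        by_contra hc
        push_neg at hc
        exact hleast _ hc (Nat.sInf_mem (⟨n, hgood⟩ :
          Set.Nonempty {m : ℕ | isTop (statusCode β T (s ++ [m]))}))
      omega
  · rw [if_neg h]
    constructor
    · omega
    · rintro ⟨hg, -⟩
      exact absurd hg h

theorem continuous_phi (β : Ordinal.{0}) :
    Continuous[betaTop β, inferInstance] (phi β) := by
  letI := betaTop β
  unfold phi
  refine Continuous.prodMk ?_ (Continuous.prodMk ?_ ?_)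
  · refine continuous_pi fun s => continuous_discrete_rng.mpr fun d => ?_
    exact betaOpen_statusEq β s d
  · refine continuous_pi fun q => continuous_discrete_rng.mpr fun k => ?_
    have hpre : (fun T : ↥(Rset β) => wOrd (statusCode β T) q) ⁻¹' {k} =
        {T : ↥(Rset β) | wOrd (statusCode β T) q = k} := rfl
    rw [hpre]
    cases k with
    | zero =>
      have heq : {T : ↥(Rset β) | wOrd (statusCode β T) q = 0} =
          {T : ↥(Rset β) | statusCode β T q.1 ∈ {v : Code β | ¬ guard' q.2.1 v}} := by
        ext T
        exact wOrd_statusCode_eq_zero_iff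
      rw [heq]
      exact betaOpen_statusIn β q.1 _
    | succ n =>
      have heq : {T : ↥(Rset β) | wOrd (statusCode β T) q = n + 1} =
          {T : ↥(Rset β) | statusCode β T q.1 ∈ {v : Code β | guard' q.2.1 v}} ∩
          ({T : ↥(Rset β) | statusCode β T (q.1 ++ [n]) ∈ {v : Code β | good q.2.1 v}} ∩
           ⋂ m : Fin n, {T : ↥(Rset β) |
             statusCode β T (q.1 ++ [(m : ℕ)]) ∈ {v : Code β | ¬ good q.2.1 v}}) := by
        ext T
        rw [Set.mem_setOf_eq, wOrd_statusCode_eq_succ_iff]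
        constructor
        · rintro ⟨h1, h2, h3⟩
          exact ⟨h1, h2, Set.mem_iInter.mpr fun m => h3 m.1 m.2⟩
        · rintro ⟨h1, h2, h3⟩
          exact ⟨h1, h2, fun m hm => Set.mem_iInter.mp h3 ⟨m, hm⟩⟩
      rw [heq]
      exact (betaOpen_statusIn β q.1 _).inter ((betaOpen_statusIn β _ _).inter
        (isOpen_iInter_of_finite fun m => betaOpen_statusIn β _ _))
  · refine continuous_pi fun s => continuous_discrete_rng.mpr fun k => ?_
    have hpre : (fun T : ↥(Rset β) => wTop (statusCode β T) s) ⁻¹' {k} =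
        {T : ↥(Rset β) | wTop (statusCode β T) s = k} := rfl
    rw [hpre]
    cases k with
    | zero =>
      have heq : {T : ↥(Rset β) | wTop (statusCode β T) s = 0} =
          {T : ↥(Rset β) | statusCode β T s ∈ {v : Code β | ¬ isTop v}} := by
        ext T
        exact wTop_statusCode_eq_zero_iff
      rw [heq]
      exact betaOpen_statusIn β s _
    | succ n =>
      have heq : {T : ↥(Rset β) | wTop (statusCode β T) s = n + 1} =
          {T : ↥(Rset β) | statusCode β T s ∈ {v : Code β | isTop v}} ∩
          ({T : ↥(Rset β) | statusCode β T (s ++ [n]) ∈ {v : Code β | isTop v}} ∩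
           ⋂ m : Fin n, {T : ↥(Rset β) |
             statusCode β T (s ++ [(m : ℕ)]) ∈ {v : Code β | ¬ isTop v}}) := by
        ext T
        rw [Set.mem_setOf_eq, wTop_statusCode_eq_succ_iff]
        constructor
        · rintro ⟨h1, h2, h3⟩
          exact ⟨h1, h2, Set.mem_iInter.mpr fun m => h3 m.1 m.2⟩
        · rintro ⟨h1, h2, h3⟩
          exact ⟨h1, h2, fun m hm => Set.mem_iInter.mp h3 ⟨m, hm⟩⟩
      rw [heq]
      exact (betaOpen_statusIn β s _).inter ((betaOpen_statusIn β _ _).inter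
        (isOpen_iInter_of_finite fun m => betaOpen_statusIn β _ _))

theorem induced_le_betaTop (β : Ordinal.{0}) :
    TopologicalSpace.induced (phi β) inferInstance ≤ betaTop β := by
  letI := TopologicalSpace.induced (phi β) (inferInstance : TopologicalSpace (XS β))
  apply le_generateFrom
  rintro U ⟨p, hp, rfl⟩
  have hU : {T : ↥(Rset β) | (T : TreeSpace) ∈ Nset β p} =
      phi β ⁻¹' (⋂ z ∈ p, {y : XS β | (y.1 z.1).val = some z.2}) := by
    ext T
    simp only [Set.mem_setOf_eq, Set.mem_preimage, Set.mem_iInter]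
    constructor
    · intro hT z hz
      exact statusCode_val_eq_some_iff.mpr (hT.2 z hz)
    · intro h
      exact ⟨T.2, fun z hz => statusCode_val_eq_some_iff.mp (h z hz)⟩
  rw [hU]
  apply isOpen_induced_iff.mpr
  refine ⟨_, ?_, rfl⟩
  refine Set.Finite.isOpen_biInter hp.1 fun z hz => ?_
  exact (isOpen_discrete {v : Code β | v.val = some z.2}).preimage (continuous_coord1 z.1)

theorem betaTop_eq_induced (β : Ordinal.{0}) :
    betaTop β = TopologicalSpace.induced (phi β) inferInstance :=
  le_antisymm (continuous_iff_le_induced.mp (continuous_phi β)) (induced_le_betaTop β)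

end Statement12

namespace Statement12

theorem countable_Iio {β : Ordinal.{0}} (hβ : β < ω₁) : (Set.Iio β).Countable := by
  rw [Cardinal.countable_iff_lt_aleph_one, Ordinal.mk_Iio_ordinal, Cardinal.lift_lt_aleph_one]
  rw [← Cardinal.ord_aleph] at hβ
  exact Cardinal.lt_ord.mp hβ

theorem countable_Code {β : Ordinal.{0}} (hβ : β < ω₁) : Countable (Code β) := by
  have h1 := countable_Iio hβ
  set D : Set (Option (WithTop Ordinal.{0})) :=
    insert none (insert (some ⊤) ((fun γ : Ordinal.{0} =>
      some ((γ : WithTop Ordinal.{0}))) '' Set.Iio β)) with hD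
  have hDc : D.Countable := ((h1.image _).insert _).insert _
  haveI := hDc.to_subtype
  have hmem : ∀ v : Code β, v.val ∈ D := by
    intro v
    rw [hD]
    simp only [Set.mem_insert_iff, Set.mem_image, Set.mem_Iio]
    rcases v.prop with h | h | ⟨γ, hγ, h⟩
    · exact Or.inl h
    · exact Or.inr (Or.inl h)
    · exact Or.inr (Or.inr ⟨γ, hγ, h.symm⟩)
  have hinj : Function.Injective (fun v : Code β => (⟨v.val, hmem v⟩ : ↥D)) := by
    intro a b h
    exact Code.ext' (congrArg Subtype.val h)
  exact hinj.countable

theorem polish_betaTop (β : Ordinal.{0}) (hβ : β < ω₁) :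
    @PolishSpace ↥(Rset β) (betaTop β) := by
  haveI : Countable ↥(Set.Iio β) := (countable_Iio hβ).to_subtype
  haveI : Countable (Code β) := countable_Code hβ
  haveI : PolishSpace (XS β) := by
    haveI : TopologicalSpace.IsCompletelyMetrizableSpace (XS β) := inferInstance
    haveI : TopologicalSpace.SeparableSpace (XS β) := inferInstance
    infer_instance
  haveI : PolishSpace ↥(Scond β) := (isClosed_Scond β).polishSpace
  let e : ↥(Rset β) ≃ ↥(Scond β) :=
    (Equiv.ofInjective (phi β) phi_injective).trans (Equiv.setCongr (range_phi β))
  have hval : (fun T => Subtype.val (e T)) = phi β := rfl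
  have hind : betaTop β = TopologicalSpace.induced e inferInstance := by
    rw [betaTop_eq_induced β]
    have h2 : (inferInstance : TopologicalSpace ↥(Scond β)) =
        TopologicalSpace.induced Subtype.val inferInstance := rfl
    rw [h2, induced_compose]
    rw [show (Subtype.val ∘ ⇑e) = phi β from hval]
  rw [hind]
  exact e.polishSpace_induced

end Statement12

theorem statement_12 (β : Ordinal.{0}) (hβ : β < ω₁) :
    @PolishSpace ↥(Rset β) (betaTop β) ∧
      betaTop β ≤ (inferInstance : TopologicalSpace ↥(Rset β)) := by
  exact ⟨Statement12.polish_betaTop β hβ, Statement12.betaTop_le_std β⟩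
end

section
/- For each countable ordinal β and each finite sequence s of natural numbers, the set {T ∈ R_β : s ∉ T} is open in the β-topology; indeed, it equals the union of the basic sets N^β_{(t,h)} over those finite β-tagged trees (t,h) ∈ P_β such that h(s') = 0 for some proper initial segment s' of s with s' ∈ t. -/
open Cardinal Ordinal Topology

lemma treeRank_eq_rank (T : TreeSpace) {s : List ℕ} (h : Acc (childRel T.1) s) :
    treeRank T s = ((h.rank : Ordinal.{0}) : WithTop Ordinal.{0}) := by
  unfold treeRank; rw [dif_pos h]

lemma treeRank_eq_top (T : TreeSpace) {s : List ℕ} (h : ¬ Acc (childRel T.1) s) :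
    treeRank T s = ⊤ := by
  unfold treeRank; rw [dif_neg h]

lemma acc_append (T : TreeSpace) (s : List ℕ) (hs : Acc (childRel T.1) s) :
    ∀ r : List ℕ, T.1 (s ++ r) = true → Acc (childRel T.1) (s ++ r) := by
  intro r
  induction r using List.reverseRecOn with
  | nil => simpa using fun _ => hs
  | append_singleton r n ih =>
    intro h
    have hr : T.1 (s ++ r) = true :=
      T.2 (s ++ (r ++ [n])) (s ++ r) ⟨[n], by rw [List.append_assoc]⟩ h
    exact (by simpa [List.append_assoc] using
      (ih hr).inv ⟨by simpa [List.append_assoc] using h, n, by rw [List.append_assoc]⟩ :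
        Acc (childRel T.1) (s ++ (r ++ [n])))

lemma rank_append_lt (T : TreeSpace) (s : List ℕ) (hs : Acc (childRel T.1) s) :
    ∀ r : List ℕ, r ≠ [] → (h : T.1 (s ++ r) = true) →
      (acc_append T s hs r h).rank < hs.rank := by
  intro r
  induction r using List.reverseRecOn with
  | nil => intro h; exact absurd rfl h
  | append_singleton r n ih =>
    intro _ h
    have hr : T.1 (s ++ r) = true :=
      T.2 (s ++ (r ++ [n])) (s ++ r) ⟨[n], by rw [List.append_assoc]⟩ h
    have hacc : Acc (childRel T.1) (s ++ r) := acc_append T s hs r hr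
    have hrel : childRel T.1 (s ++ (r ++ [n])) (s ++ r) :=
      ⟨h, n, by rw [List.append_assoc]⟩
    have h1 : (acc_append T s hs (r ++ [n]) h).rank < hacc.rank := by
      have := hacc.rank_lt_of_rel hrel
      convert this using 2
    rcases eq_or_ne r [] with rfl | hne
    · simpa using h1
    · exact h1.trans (ih hne hr)

lemma rank_zero_of_no_child {α : Type*} {r : α → α → Prop} {a : α} (h : Acc r a)
    (hno : ∀ b, ¬ r b a) : h.rank = 0 := by
  rw [h.rank_eq]
  haveI : IsEmpty {b // r b a} := ⟨fun b => hno b b.2⟩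
  rw [ciSup_of_empty]
  rfl

lemma exists_max_prefix (T : TreeSpace) (hT : T.1 [] = true)
    (hfull : ∀ (t : List ℕ) (n m : ℕ), T.1 (t ++ [n]) = T.1 (t ++ [m]))
    {s : List ℕ} (hs : T.1 s = false) :
    ∃ s' : List ℕ, s' <+: s ∧ s' ≠ s ∧ T.1 s' = true ∧ ∀ n, T.1 (s' ++ [n]) = false := by
  classical
  have hsne : s ≠ [] := by rintro rfl; rw [hT] at hs; cases hs
  have hlen : 0 < s.length := List.length_pos_iff.2 hsne
  have hex : ∃ k, T.1 (s.take (k+1)) = false := by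
    refine ⟨s.length - 1, ?_⟩
    have h1 : s.length - 1 + 1 = s.length := by omega
    rwa [h1, List.take_length]
  set k := Nat.find hex with hkdef
  have hk : T.1 (s.take (k+1)) = false := Nat.find_spec hex
  have hkle : k ≤ s.length - 1 :=
    Nat.find_le (by
      have h1 : s.length - 1 + 1 = s.length := by omega
      rwa [h1, List.take_length])
  have hklt : k < s.length := lt_of_le_of_lt hkle (Nat.pred_lt hlen.ne')
  refine ⟨s.take k, List.take_prefix k s, ?_, ?_, ?_⟩
  · intro heq
    have := congrArg List.length heq
    rw [List.length_take] at this
    omega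
  · match hk2 : k, hkdef with
    | 0, _ => simpa using hT
    | (j+1), hkdef =>
      have hmin := Nat.find_min hex (by omega : j < Nat.find hex)
      simpa using hmin
  · intro n
    have hsplit : s.take (k+1) = s.take k ++ [s[k]] := by
      rw [List.take_succ, List.getElem?_eq_getElem hklt]
      rfl
    rw [hfull (s.take k) n (s[k]), ← hsplit]
    exact hk

theorem statement_13 (β : Ordinal.{0}) (hβ : β < ω₁) (s : List ℕ) :
    @IsOpen ↥(Rset β) (betaTop β) {T : ↥(Rset β) | (T : TreeSpace).1 s = false} ∧
    {T : ↥(Rset β) | (T : TreeSpace).1 s = false} =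
      ⋃ p ∈ {p ∈ Pfin β | ∃ s' : List ℕ, s' <+: s ∧ s' ≠ s ∧
          (s', ((0 : Ordinal.{0}) : WithTop Ordinal.{0})) ∈ p},
        {T : ↥(Rset β) | (T : TreeSpace) ∈ Nset β p} := by
  classical
  letI : TopologicalSpace ↥(Rset β) := betaTop β
  have key : {T : ↥(Rset β) | (T : TreeSpace).1 s = false} =
      ⋃ p ∈ {p ∈ Pfin β | ∃ s' : List ℕ, s' <+: s ∧ s' ≠ s ∧
          (s', ((0 : Ordinal.{0}) : WithTop Ordinal.{0})) ∈ p},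
        {T : ↥(Rset β) | (T : TreeSpace) ∈ Nset β p} := by
    ext T
    simp only [Set.mem_setOf_eq, Set.mem_iUnion, exists_prop]
    constructor
    · intro hfalse
      obtain ⟨⟨hempty, hfull⟩, hR⟩ := T.2
      obtain ⟨s', hpre, hne, hs'T, hchild⟩ := exists_max_prefix _ hempty hfull hfalse
      have hno : ∀ c, ¬ childRel (T : TreeSpace).1 c s' := by
        rintro c ⟨hc, n, rfl⟩
        rw [hchild n] at hc; cases hc
      have hacc : Acc (childRel (T : TreeSpace).1) s' :=
        ⟨_, fun c hc => absurd hc (hno c)⟩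
      have hrank0 : treeRank (T : TreeSpace) s' = ((0 : Ordinal.{0}) : WithTop Ordinal.{0}) := by
        rw [treeRank_eq_rank _ hacc, rank_zero_of_no_child hacc hno]
      have hmemT : ∀ t, t <+: s' → (T : TreeSpace).1 t = true :=
        fun t ht => (T : TreeSpace).2 s' t ht hs'T
      set p : Tagged := (fun t => (t, treeRank (T : TreeSpace) t)) '' {t | t <+: s'} with hp
      have hdom : p.dom = {t | t <+: s'} := by
        ext t
        constructor
        · rintro ⟨⟨u, h⟩, ⟨v, hv, heq⟩, rfl⟩
          obtain ⟨rfl, -⟩ := Prod.mk.injEq .. ▸ heq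
          exact hv
        · intro ht
          exact ⟨(t, treeRank (T : TreeSpace) t), ⟨t, ht, rfl⟩, rfl⟩
      have hfin : p.Finite := by
        apply Set.Finite.image
        apply (s'.inits.finite_toSet).subset
        intro t ht
        simpa [List.mem_inits] using ht
      refine ⟨p, ⟨⟨hfin, ⟨?_, ?_, ?_⟩, ?_⟩, s', hpre, hne, ?_⟩, ?_⟩
      · rintro t h h' ⟨u, hu, hequ⟩ ⟨v, hv, heqv⟩
        obtain ⟨rfl, rfl⟩ := Prod.mk.injEq .. ▸ hequ
        obtain ⟨rfl, rfl⟩ := Prod.mk.injEq .. ▸ heqv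
        rfl
      · intro a b hba ha
        rw [hdom] at ha ⊢
        exact hba.trans ha
      · rintro a h b h' ⟨u, hu, hequ⟩ ⟨v, hv, heqv⟩ hba hnab
        obtain ⟨rfl, rfl⟩ := Prod.mk.injEq .. ▸ hequ
        obtain ⟨rfl, rfl⟩ := Prod.mk.injEq .. ▸ heqv
        by_cases hb : Acc (childRel (T : TreeSpace).1) v
        · right
          obtain ⟨r, rfl⟩ := hba
          have hrne : r ≠ [] := fun h => hnab (by rw [h, List.append_nil])
          have huT : (T : TreeSpace).1 (v ++ r) = true := hmemT _ hu
          rw [treeRank_eq_rank _ hb, treeRank_eq_rank _ (acc_append _ v hb r huT)]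
          exact_mod_cast rank_append_lt _ v hb r hrne huT
        · left
          rw [treeRank_eq_top _ hb]
      · rintro ⟨t, h⟩ ⟨u, hu, heq⟩
        obtain ⟨rfl, rfl⟩ := Prod.mk.injEq .. ▸ heq
        exact hR u (hmemT u hu)
      · exact ⟨s', List.prefix_refl s', by simp only [hrank0]⟩
      · refine ⟨T.2, ?_⟩
        rintro ⟨t, h⟩ ⟨u, hu, heq⟩
        obtain ⟨rfl, rfl⟩ := Prod.mk.injEq .. ▸ heq
        exact ⟨hmemT u hu, rfl⟩
    · rintro ⟨p, ⟨hpP, s', hpre, hne, h0⟩, hN⟩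
      obtain ⟨hmem, hrk⟩ := hN.2 _ h0
      by_contra hc
      have hcT : (T : TreeSpace).1 s = true := by
        cases h : (T : TreeSpace).1 s
        · exact absurd h hc
        · rfl
      obtain ⟨r, rfl⟩ := hpre
      have hrne : r ≠ [] := fun h => hne (by rw [h, List.append_nil])
      obtain ⟨n, r', rfl⟩ := List.exists_cons_of_ne_nil hrne
      have hchild : (T : TreeSpace).1 (s' ++ [n]) = true :=
        (T : TreeSpace).2 _ _ ⟨r', by simp⟩ hcT
      have hacc : Acc (childRel (T : TreeSpace).1) s' := by
        by_contra hnacc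
        rw [treeRank_eq_top _ hnacc] at hrk
        simp at hrk
      have hrel : childRel (T : TreeSpace).1 (s' ++ [n]) s' := ⟨hchild, n, rfl⟩
      rw [treeRank_eq_rank _ hacc] at hrk
      have h0' : hacc.rank = 0 := WithTop.coe_injective hrk
      exact absurd (h0' ▸ hacc.rank_lt_of_rel hrel) (not_lt_of_ge zero_le)
  refine ⟨?_, key⟩
  rw [key]
  apply isOpen_biUnion
  intro p hp
  exact TopologicalSpace.isOpen_generateFrom_of_mem ⟨p, hp.1, rfl⟩
end

section
/- Let D₁, D₂ ⊆ I be disjoint sets, let A₁ = I \ D₁ and A₂ = I \ D₂, and let B̂₁ ⊆ I × [0,1/3] and B̂₂ ⊆ I × [2/3,1] be closed sets such that for i = 1, 2: if x ∈ A_i then (B̂_i)_x is uncountable, and if x ∉ A_i then (B̂_i)_x consists only of rational numbers. Let B = B̂₁ ∪ B̂₂ and let α be a countable ordinal. If {u_γ : γ < ω₁} is a family of pairwise disjoint Borel uniformizations of B each of Borel function rank at most α, then, setting E_γ = {x ∈ I : u_γ(x) is an irrational number greater than 1/2}, each E_γ is a Π⁰_{α+1} set and the union ⋃_{γ < ω₁}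 E_γ contains D₁ and is disjoint from D₂; i.e., D₁ and D₂ are separated by a union of ℵ₁ many Π⁰_{α+1} sets. -/
open Cardinal Ordinal Topology

/-- The Borel hierarchy: `SigmaZero X 1` is the class of open sets, and for `α > 1`,
`SigmaZero X α` is the class of countable unions of sets each of whose complement is
`SigmaZero X α'` for some `1 ≤ α' < α` (i.e. countable unions of `Π⁰_{α'}` sets). -/
inductive SigmaZero (X : Type*) [TopologicalSpace X] : Ordinal.{0} → Set X → Prop
  | isOpen (s : Set X) (hs : IsOpen s) : SigmaZero X 1 s
  | iUnion (α : Ordinal.{0}) (f : ℕ → Set X) (ρ : ℕ → Ordinal.{0})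
      (hα : 1 < α) (h1 : ∀ n, 1 ≤ ρ n) (h2 : ∀ n, ρ n < α)
      (h : ∀ n, SigmaZero X (ρ n) ((f n)ᶜ)) : SigmaZero X α (⋃ n, f n)

/-- `Π⁰_α` sets: complements of `Σ⁰_α` sets. -/
def PiZero (X : Type*) [TopologicalSpace X] (α : Ordinal.{0}) (s : Set X) : Prop :=
  SigmaZero X α sᶜ

/-- A (Borel) function has Borel function rank at most `α` if the preimage of every
open set is `Σ⁰_α`. -/
def BorelRankLE {X Y : Type*} [TopologicalSpace X] [TopologicalSpace Y]
    (α : Ordinal.{0}) (u : X → Y) : Prop :=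
  ∀ V : Set Y, IsOpen V → SigmaZero X α (u ⁻¹' V)

open unitInterval

/-- Any `Σ⁰_α` set has `α ≥ 1`. -/
lemma sigmaZero_one_le {X : Type*} [TopologicalSpace X] {α : Ordinal.{0}} {s : Set X}
    (h : SigmaZero X α s) : 1 ≤ α := by
  cases h with
  | isOpen => exact le_rfl
  | iUnion α f ρ hα => exact hα.le

lemma uncountable_lt_omega1 : ¬ Countable {γ : Ordinal.{0} // γ < ω₁} := by
  intro h
  have h2 : #{γ : Ordinal.{0} // γ < ω₁} ≤ ℵ₀ := Cardinal.mk_le_aleph0_iff.mpr h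
  have h3 : #(Set.Iio (ω₁ : Ordinal.{0})) = Cardinal.lift.{1} (ω₁ : Ordinal.{0}).card :=
    Ordinal.mk_Iio_ordinal _
  rw [Ordinal.card_omega] at h3
  have : Cardinal.lift.{1} (ℵ_ 1) ≤ Cardinal.lift.{1} ℵ₀ := by
    rw [Cardinal.lift_aleph0]; rw [← h3]; exact h2
  rw [Cardinal.lift_le] at this
  exact absurd this (not_le.mpr aleph0_lt_aleph_one)

theorem statement_17 (D₁ D₂ : Set I) (hD : Disjoint D₁ D₂)
    (B₁ B₂ : Set (I × I)) (hc₁ : IsClosed B₁) (hc₂ : IsClosed B₂)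
    (hr₁ : ∀ z ∈ B₁, (z.2 : ℝ) ≤ 1 / 3) (hr₂ : ∀ z ∈ B₂, (2 : ℝ) / 3 ≤ (z.2 : ℝ))
    (h₁u : ∀ x : I, x ∉ D₁ → ¬Set.Countable {y : I | (x, y) ∈ B₁})
    (h₁q : ∀ x : I, x ∈ D₁ → ∀ y : I, (x, y) ∈ B₁ → ∃ q : ℚ, (y : ℝ) = (q : ℝ))
    (h₂u : ∀ x : I, x ∉ D₂ → ¬Set.Countable {y : I | (x, y) ∈ B₂})
    (h₂q : ∀ x : I, x ∈ D₂ → ∀ y : I, (x, y) ∈ B₂ → ∃ q : ℚ, (y : ℝ) = (q : ℝ))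
    (α : Ordinal.{0}) (hα : α < ω₁)
    (u : {γ : Ordinal.{0} // γ < ω₁} → I → I)
    (hu : ∀ γ, @Measurable _ _ (borel I) (borel I) (u γ) ∧
      (∀ x : I, (x, u γ x) ∈ B₁ ∪ B₂) ∧ BorelRankLE α (u γ))
    (hdisj : ∀ γ δ, γ ≠ δ → ∀ x : I, u γ x ≠ u δ x) :
    (∀ γ, PiZero I (α + 1)
      {x : I | 1 / 2 < ((u γ x : I) : ℝ) ∧ Irrational ((u γ x : I) : ℝ)}) ∧
    D₁ ⊆ (⋃ γ, {x : I | 1 / 2 < ((u γ x : I) : ℝ) ∧ Irrational ((u γ x : I) : ℝ)}) ∧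
    Disjoint (⋃ γ, {x : I | 1 / 2 < ((u γ x : I) : ℝ) ∧ Irrational ((u γ x : I) : ℝ)}) D₂ := by
  refine ⟨?_, ?_, ?_⟩
  · -- Part 1: each E_γ is Π⁰_{α+1}
    intro γ
    have hrank : BorelRankLE α (u γ) := (hu γ).2.2
    have h1α : 1 ≤ α := sigmaZero_one_le (hrank Set.univ isOpen_univ)
    have hαα : α < α + 1 := by
      rw [Ordinal.add_one_eq_succ]; exact Order.lt_succ α
    obtain ⟨e, he⟩ : ∃ e : ℕ → ℚ, Function.Surjective e :=
      ⟨_, (Denumerable.eqv ℚ).symm.surjective⟩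
    set f : ℕ → Set I := fun n =>
      Nat.casesOn n (u γ ⁻¹' {y : I | (y : ℝ) ≤ 1 / 2})
        (fun m => u γ ⁻¹' {y : I | (y : ℝ) = (e m : ℝ)}) with hf
    have heq : {x : I | 1 / 2 < ((u γ x : I) : ℝ) ∧ Irrational ((u γ x : I) : ℝ)}ᶜ
        = ⋃ n, f n := by
      ext x
      simp only [Set.mem_compl_iff, Set.mem_setOf_eq, Set.mem_iUnion]
      constructor
      · intro h
        rcases not_and_or.mp h with h | h
        · exact ⟨0, not_lt.mp h⟩
        · rw [Irrational] at h
          push_neg at h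
          obtain ⟨q, hq⟩ := h
          obtain ⟨m, hm⟩ := he q
          refine ⟨m + 1, ?_⟩
          show (↑(u γ x) : ℝ) = ((e m : ℚ) : ℝ)
          rw [hm]
          exact hq.symm
      · rintro ⟨n, hn⟩ ⟨hlt, hirr⟩
        cases n with
        | zero => exact absurd hlt (not_lt.mpr hn)
        | succ m => exact hirr ⟨e m, (hn : (↑(u γ x) : ℝ) = _).symm⟩
    rw [PiZero, heq]
    refine SigmaZero.iUnion (α + 1) f (fun _ => α) (lt_of_le_of_lt h1α hαα)
      (fun _ => h1α) (fun _ => hαα) ?_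
    intro n
    cases n with
    | zero =>
      show SigmaZero I α (u γ ⁻¹' {y : I | (y : ℝ) ≤ 1 / 2})ᶜ
      rw [← Set.preimage_compl]
      refine hrank _ ?_
      have : {y : I | (y : ℝ) ≤ 1 / 2} = Subtype.val ⁻¹' Set.Iic (1 / 2 : ℝ) := rfl
      rw [this]
      exact (isClosed_Iic.preimage continuous_subtype_val).isOpen_compl
    | succ m =>
      show SigmaZero I α (u γ ⁻¹' {y : I | (y : ℝ) = (e m : ℝ)})ᶜ
      rw [← Set.preimage_compl]
      refine hrank _ ?_
      have : {y : I | (y : ℝ) = (e m : ℝ)} = Subtype.val ⁻¹' {((e m : ℚ) : ℝ)} := rfl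
      rw [this]
      exact ((isClosed_singleton).preimage continuous_subtype_val).isOpen_compl
  · -- Part 2: D₁ ⊆ ⋃ E_γ
    intro x hx
    set R : Set I := {y : I | ∃ q : ℚ, (y : ℝ) = (q : ℝ)} with hR
    have hRc : R.Countable := by
      have : R = Subtype.val ⁻¹' (Set.range ((↑) : ℚ → ℝ)) := by
        ext y; simp [hR, eq_comm]
      rw [this]
      exact (Set.countable_range _).preimage Subtype.val_injective
    set S : Set {γ : Ordinal.{0} // γ < ω₁} := {γ | u γ x ∈ R} with hS
    have hSc : S.Countable := by
      refine Set.MapsTo.countable_of_injOn (f := fun γ => u γ x) (fun γ hγ => hγ) ?_ hRc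
      intro γ _ δ _ hgd
      by_contra hne
      exact hdisj γ δ hne x hgd
    have hne : S ≠ Set.univ := by
      intro hSu
      apply uncountable_lt_omega1
      rw [← Set.countable_univ_iff, ← hSu]
      exact hSc
    obtain ⟨γ, hγ⟩ : ∃ γ, γ ∉ S := by
      by_contra h
      push_neg at h
      exact hne (Set.eq_univ_of_forall h)
    have hirr : Irrational ((u γ x : I) : ℝ) := by
      intro ⟨q, hq⟩
      exact hγ ⟨q, hq.symm⟩
    refine Set.mem_iUnion.mpr ⟨γ, ?_, hirr⟩
    rcases (hu γ).2.1 x with hB | hB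
    · obtain ⟨q, hq⟩ := h₁q x hx (u γ x) hB
      exact absurd ⟨q, hq.symm⟩ hirr
    · have := hr₂ _ hB
      simp only at this
      linarith
  · -- Part 3: disjoint from D₂
    rw [Set.disjoint_left]
    intro x hx hx2
    obtain ⟨γ, hlt, hirr⟩ := Set.mem_iUnion.mp hx
    rcases (hu γ).2.1 x with hB | hB
    · have := hr₁ _ hB
      simp only at this
      linarith
    · obtain ⟨q, hq⟩ := h₂q x hx2 (u γ x) hB
      exact hirr ⟨q, hq.symm⟩
end
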